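/- arXiv:gr-qc/0604016 — 10 statements merged into one kernel-verified Lean document; each statement's English description precedes it below -/
import Mathlib

section
/- Let 0 ≤ k ≤ D+1. Then det Gram(e_k,…,e_D) = det Gram(e_0,…,e_D) · det Gram(b_0,…,b_{k−1}), where det Gram(v_1,…,v_m) denotes det(⟨v_i,v_j⟩)_{1≤i,j≤m} and the determinant of an empty matrix is 1. Equivalently, 𝒱(e_0,…,e_D) = 𝒱(e_k,…,e_D)/𝒱(b_0,…,b_{k−1}). -/
/-!
Let `G` and `H` be the Gram matrices of `e` and `b`. Expanding `b j` in the basis `e`, whose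
coefficients are read off by the dual vectors, shows `G * H = 1`. The theorem is then Jacobi's
complementary minor identity for a pair of inverse matrices: ordering the indices as
`{x < k} ⊕ {k ≤ x}`, multiplying `G` by the block-lower-triangular matrix built from the first
block column of `H` yields a block-upper-triangular matrix with diagonal blocks `1` and the
lower-right block of `G`.
-/

open scoped InnerProductSpace RealInnerProductSpace

namespace Matrix

variable {m n R : Type*} [Fintype m] [Fintype n] [DecidableEq m] [DecidableEq n] [CommRing R]

theorem det_eq_det_fromBlocks_mul_det_of_fromBlocks_mul_eq_one
    {A A' : Matrix m m R} {B B' : Matrix m n R} {C C' : Matrix n m R} {D D' : Matrix n n R}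
    (h : fromBlocks A B C D * fromBlocks A' B' C' D' = 1) :
    D.det = (fromBlocks A B C D).det * A'.det := by
  rw [fromBlocks_multiply, ← fromBlocks_one, fromBlocks_inj] at h
  obtain ⟨h₁₁, -, h₂₁, -⟩ := h
  have hprod : fromBlocks A B C D * fromBlocks A' 0 C' 1 = fromBlocks 1 B 0 D := by
    rw [fromBlocks_multiply, h₁₁, h₂₁]
    simp
  simpa [det_fromBlocks_zero₁₂, det_fromBlocks_zero₂₁] using (congrArg det hprod).symm

theorem det_submatrix_eq_det_mul_det_submatrix_of_mul_eq_one {G H : Matrix n n R} (h : G * H = 1)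
    (p q : n → Prop) [DecidablePred p] [DecidablePred q] (hpq : ∀ x, q x ↔ ¬p x) :
    (G.submatrix ((↑) : {x // q x} → n) (↑)).det
      = G.det * (H.submatrix ((↑) : {x // p x} → n) (↑)).det := by
  let σ : {x // p x} ⊕ {x // q x} ≃ n :=
    (Equiv.sumCongr (Equiv.refl _) (Equiv.subtypeEquivRight hpq)).trans (Equiv.sumCompl p)
  have hσ : G.submatrix σ σ * H.submatrix σ σ = 1 := by
    rw [submatrix_mul_equiv, h, submatrix_one_equiv]
  rw [← fromBlocks_toBlocks (G.submatrix σ σ), ← fromBlocks_toBlocks (H.submatrix σ σ)] at hσ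
  have hdet := det_eq_det_fromBlocks_mul_det_of_fromBlocks_mul_eq_one hσ
  rwa [fromBlocks_toBlocks, det_submatrix_equiv_self] at hdet

end Matrix

namespace Module.Basis

variable {ι 𝕜 E : Type*} [Fintype ι] [DecidableEq ι] [RCLike 𝕜]
  [NormedAddCommGroup E] [InnerProductSpace 𝕜 E]

theorem repr_apply_eq_inner_of_dual (e : Basis ι 𝕜 E) {b : ι → E}
    (hb : ∀ i j, ⟪b i, e j⟫_𝕜 = if i = j then 1 else 0) (v : E) (i : ι) :
    e.repr v i = ⟪b i, v⟫_𝕜 :=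
  calc e.repr v i = ∑ j, e.repr v j * ⟪b i, e j⟫_𝕜 := by simp [hb]
    _ = ⟪b i, ∑ j, e.repr v j • e j⟫_𝕜 := by simp only [inner_sum, inner_smul_right]
    _ = ⟪b i, v⟫_𝕜 := by rw [e.sum_repr]

theorem gram_mul_gram_dual_eq_one (e : Basis ι 𝕜 E) {b : ι → E}
    (hb : ∀ i j, ⟪b i, e j⟫_𝕜 = if i = j then 1 else 0) :
    Matrix.gram 𝕜 e * Matrix.gram 𝕜 b = 1 := by
  ext i j
  calc ∑ l, ⟪e i, e l⟫_𝕜 * ⟪b l, b j⟫_𝕜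
      = ⟪e i, ∑ l, e.repr (b j) l • e l⟫_𝕜 := by
        simp [inner_sum, inner_smul_right, e.repr_apply_eq_inner_of_dual hb, mul_comm]
    _ = (1 : Matrix ι ι 𝕜) i j := by
        rw [e.sum_repr, ← inner_conj_symm, hb, Matrix.one_apply]
        split_ifs <;> simp_all [eq_comm]

end Module.Basis

theorem stmt_0_general (D : ℕ) (E : Type*) [NormedAddCommGroup E] [InnerProductSpace ℝ E]
    (e : Module.Basis (Fin (D + 1)) ℝ E) (b : Fin (D + 1) → E)
    (hb : ∀ i j, ⟪b i, e j⟫ = if i = j then 1 else 0)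
    (k : ℕ) :
    Matrix.det (Matrix.of fun i j : {x : Fin (D + 1) // k ≤ (x : ℕ)} => ⟪e i.1, e j.1⟫)
      = Matrix.det (Matrix.of fun i j : Fin (D + 1) => ⟪e i, e j⟫)
        * Matrix.det (Matrix.of fun i j : {x : Fin (D + 1) // (x : ℕ) < k} => ⟪b i.1, b j.1⟫) :=
  Matrix.det_submatrix_eq_det_mul_det_submatrix_of_mul_eq_one (e.gram_mul_gram_dual_eq_one hb)
    (fun x => (x : ℕ) < k) (fun x => k ≤ (x : ℕ)) fun _ => not_lt.symm

/-- For a basis `e₀,…,e_D` of a real inner product space of dimension `D+1`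
with dual basis `b₀,…,b_D` (characterized by `⟪bᵢ, eⱼ⟫ = δᵢⱼ`), and `0 ≤ k ≤ D+1`,
`det Gram(e_k,…,e_D) = det Gram(e_0,…,e_D) · det Gram(b_0,…,b_{k−1})`. -/
theorem stmt_0 (D : ℕ) (E : Type*) [NormedAddCommGroup E] [InnerProductSpace ℝ E]
    (hdim : Module.finrank ℝ E = D + 1)
    (e : Module.Basis (Fin (D + 1)) ℝ E) (b : Fin (D + 1) → E)
    (hb : ∀ i j, ⟪b i, e j⟫ = if i = j then 1 else 0)
    (k : ℕ) (hk : k ≤ D + 1) :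
    Matrix.det (Matrix.of fun i j : {x : Fin (D + 1) // k ≤ (x : ℕ)} => ⟪e i.1, e j.1⟫)
      = Matrix.det (Matrix.of fun i j : Fin (D + 1) => ⟪e i, e j⟫)
        * Matrix.det (Matrix.of fun i j : {x : Fin (D + 1) // (x : ℕ) < k} => ⟪b i.1, b j.1⟫) :=
  stmt_0_general D E e b hb k
end

section
/- For all indices i ≠ j, 𝒱 · 𝒱_{ij} = 𝒱_i · 𝒱_j · sin θ_{ij}, where θ_{ij} ∈ [0,π] is the interior dihedral angle defined by cos θ_{ij} = −⟨b_i,b_j⟩/(‖b_i‖‖b_j‖). -/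
/-!
The inverse of the Gram matrix of `e` is the Gram matrix of the dual basis `b`. Jacobi's
complementary-minor identity then gives `𝒱_i² = ‖b_i‖² 𝒱²` and
`𝒱_{ij}² = (‖b_i‖²‖b_j‖² - ⟪b_i, b_j⟫²) 𝒱²`, and the last factor is
`(‖b_i‖ ‖b_j‖ sin θ_{ij})²`, since `θ_{ij}` is the angle between `-b_i` and `b_j`.
-/

open scoped RealInnerProductSpace

namespace Matrix

variable {R : Type*} [CommRing R] {n : Type*} [Fintype n] [DecidableEq n]

theorem det_fromBlocks_mul_det_eq_det_of_mul_eq_one {m k : Type*} [Fintype m] [DecidableEq m]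
    [Fintype k] [DecidableEq k] {A : Matrix m m R} {B : Matrix m k R} {C : Matrix k m R}
    {D : Matrix k k R} {A' : Matrix m m R} {B' : Matrix m k R} {C' : Matrix k m R}
    {D' : Matrix k k R} (h : fromBlocks A B C D * fromBlocks A' B' C' D' = 1) :
    (fromBlocks A B C D).det * D'.det = A.det := by
  rw [fromBlocks_multiply, ← fromBlocks_one, fromBlocks_inj] at h
  obtain ⟨-, h₁₂, -, h₂₂⟩ := h
  have hmul : fromBlocks A B C D * fromBlocks 1 B' 0 D' = fromBlocks A 0 C 1 := by
    rw [fromBlocks_multiply, h₁₂, h₂₂]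
    simp
  simpa [det_fromBlocks_zero₂₁, det_fromBlocks_zero₁₂] using congrArg det hmul

/-- Jacobi's complementary minor identity, for principal minors. -/
theorem det_mul_det_submatrix_compl_eq {G H : Matrix n n R} (hGH : G * H = 1) (p : n → Prop)
    [DecidablePred p] :
    G.det * (H.submatrix ((↑) : {x // ¬p x} → n) (↑)).det
      = (G.submatrix ((↑) : {x // p x} → n) (↑)).det := by
  set σ := Equiv.sumCompl p
  have hblocks : ∀ M : Matrix n n R, M.submatrix σ σ = fromBlocks
      (M.submatrix (σ ∘ Sum.inl) (σ ∘ Sum.inl)) (M.submatrix (σ ∘ Sum.inl) (σ ∘ Sum.inr))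
      (M.submatrix (σ ∘ Sum.inr) (σ ∘ Sum.inl)) (M.submatrix (σ ∘ Sum.inr) (σ ∘ Sum.inr)) := by
    intro M
    ext (a | a) (c | c) <;> rfl
  have h : G.submatrix σ σ * H.submatrix σ σ = 1 := by
    rw [submatrix_mul_equiv, hGH, submatrix_one_equiv]
  rw [hblocks G, hblocks H] at h
  have := det_fromBlocks_mul_det_eq_det_of_mul_eq_one h
  rwa [← hblocks, det_submatrix_equiv_self] at this

theorem det_submatrix_ne_eq {G H : Matrix n n R} (hGH : G * H = 1) (k : n) :
    (G.submatrix ((↑) : {x // x ≠ k} → n) (↑)).det = H k k * G.det := by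
  let : Unique {x // ¬x ≠ k} := ⟨⟨⟨k, not_not_intro rfl⟩⟩, fun x ↦ Subtype.ext (not_not.mp x.2)⟩
  rw [← det_mul_det_submatrix_compl_eq hGH, det_unique (H.submatrix _ _), mul_comm]
  rfl

theorem det_submatrix_not_ne_and_ne {H : Matrix n n R} {i j : n} (hij : i ≠ j) :
    (H.submatrix ((↑) : {x // ¬(x ≠ i ∧ x ≠ j)} → n) (↑)).det
      = H i i * H j j - H i j * H j i := by
  let f : Fin 2 → {x // ¬(x ≠ i ∧ x ≠ j)} := ![⟨i, by simp⟩, ⟨j, by simp⟩]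
  have hf : Function.Bijective f := by
    refine ⟨?_, fun x ↦ ?_⟩
    · intro a c hac
      fin_cases a <;> fin_cases c <;> simp_all [f, Subtype.ext_iff, hij.symm]
    · rcases not_and_or.mp x.2 with h | h
      · exact ⟨0, Subtype.ext (not_not.mp h).symm⟩
      · exact ⟨1, Subtype.ext (not_not.mp h).symm⟩
  rw [← det_submatrix_equiv_self (Equiv.ofBijective f hf), det_fin_two]
  rfl

theorem det_submatrix_ne_and_ne_eq {G H : Matrix n n R} (hGH : G * H = 1) {i j : n}
    (hij : i ≠ j) :
    (G.submatrix ((↑) : {x // x ≠ i ∧ x ≠ j} → n) (↑)).det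
      = (H i i * H j j - H i j * H j i) * G.det := by
  rw [← det_mul_det_submatrix_compl_eq hGH, det_submatrix_not_ne_and_ne hij, mul_comm]

end Matrix

section DualBasis

variable {E : Type*} [NormedAddCommGroup E] [InnerProductSpace ℝ E] {ι : Type*} [DecidableEq ι]

theorem Module.Basis.inner_dual_eq_repr (e : Module.Basis ι ℝ E) {b : ι → E}
    (hb : ∀ i j, ⟪b i, e j⟫ = if i = j then 1 else 0) (k : ι) (v : E) :
    ⟪b k, v⟫ = e.repr v k := by
  have : (innerₛₗ ℝ (b k) : E →ₗ[ℝ] ℝ) = e.coord k :=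
    e.ext fun m ↦ by simp [hb, Finsupp.single_apply, eq_comm]
  exact LinearMap.congr_fun this v

theorem Module.Basis.gram_mul_gram_dual [Fintype ι] (e : Module.Basis ι ℝ E)
    {b : ι → E} (hb : ∀ i j, ⟪b i, e j⟫ = if i = j then 1 else 0) :
    Matrix.gram ℝ e * Matrix.gram ℝ b = 1 := by
  ext p q
  calc (Matrix.gram ℝ e * Matrix.gram ℝ b) p q
      = ⟪e p, ∑ k, e.repr (b q) k • e k⟫ := by
        rw [Matrix.mul_apply, inner_sum]
        refine Finset.sum_congr rfl fun k _ ↦ ?_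
        rw [real_inner_smul_right, ← e.inner_dual_eq_repr hb, mul_comm]
        rfl
    _ = (1 : Matrix ι ι ℝ) p q := by
        rw [e.sum_repr, real_inner_comm, hb, Matrix.one_apply]
        exact if_congr eq_comm rfl rfl

end DualBasis

theorem sin_arccos_neg_inner_div_mul_norm_mul_norm {E : Type*} [NormedAddCommGroup E]
    [InnerProductSpace ℝ E] (x y : E) :
    Real.sin (Real.arccos (-⟪x, y⟫ / (‖x‖ * ‖y‖))) * (‖x‖ * ‖y‖)
      = √(⟪x, x⟫ * ⟪y, y⟫ - ⟪x, y⟫ * ⟪x, y⟫) := by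
  simpa [InnerProductGeometry.angle, neg_div] using
    InnerProductGeometry.sin_angle_mul_norm_mul_norm (-x) y

theorem stmt_2_general (D : ℕ) (E : Type*) [NormedAddCommGroup E]
    [InnerProductSpace ℝ E]
    (e : Module.Basis (Fin (D + 1)) ℝ E) (b : Fin (D + 1) → E)
    (hb : ∀ i j, ⟪b i, e j⟫ = if i = j then 1 else 0)
    (i j : Fin (D + 1)) (hij : i ≠ j) :
    Real.sqrt (Matrix.det (Matrix.of fun a c : Fin (D + 1) => ⟪e a, e c⟫))
        * Real.sqrt (Matrix.det
          (Matrix.of fun a c : {x : Fin (D + 1) // x ≠ i ∧ x ≠ j} => ⟪e a.1, e c.1⟫))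
      = Real.sqrt (Matrix.det (Matrix.of fun a c : {x : Fin (D + 1) // x ≠ i} => ⟪e a.1, e c.1⟫))
        * Real.sqrt (Matrix.det
            (Matrix.of fun a c : {x : Fin (D + 1) // x ≠ j} => ⟪e a.1, e c.1⟫))
        * Real.sin (Real.arccos (-⟪b i, b j⟫ / (‖b i‖ * ‖b j‖))) := by
  have hGH := e.gram_mul_gram_dual hb
  set g := (Matrix.gram ℝ e).det
  have hVi : ∀ k, (Matrix.of fun a c : {x // x ≠ k} => ⟪e a.1, e c.1⟫).det = ⟪b k, b k⟫ * g :=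
    Matrix.det_submatrix_ne_eq hGH
  have hVij : (Matrix.of fun a c : {x // x ≠ i ∧ x ≠ j} => ⟪e a.1, e c.1⟫).det
      = (⟪b i, b i⟫ * ⟪b j, b j⟫ - ⟪b i, b j⟫ * ⟪b j, b i⟫) * g :=
    Matrix.det_submatrix_ne_and_ne_eq hGH hij
  have hsin := sin_arccos_neg_inner_div_mul_norm_mul_norm (b i) (b j)
  have hP : 0 ≤ ⟪b i, b i⟫ * ⟪b j, b j⟫ - ⟪b i, b j⟫ * ⟪b i, b j⟫ :=
    sub_nonneg.2 (real_inner_mul_inner_self_le _ _)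
  change √g * _ = _
  rw [hVi, hVi, hVij, real_inner_comm (b i) (b j), Real.sqrt_mul hP,
    Real.sqrt_mul real_inner_self_nonneg, Real.sqrt_mul real_inner_self_nonneg,
    ← norm_eq_sqrt_real_inner, ← norm_eq_sqrt_real_inner]
  linear_combination (√g * √g) * hsin.symm

/-- For a basis `e₀,…,e_D` (`D ≥ 1`) of a real inner product space of
dimension `D+1` with dual basis `b₀,…,b_D`, and `i ≠ j`,
`𝒱 · 𝒱_{ij} = 𝒱_i · 𝒱_j · sin θ_{ij}` where `θ_{ij} = arccos(−⟪bᵢ,bⱼ⟫/(‖bᵢ‖‖bⱼ‖))`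
and `𝒱_S` is the square root of the Gram determinant of the `e_a`, `a ∈ S`. -/
theorem stmt_2 (D : ℕ) (hD : 1 ≤ D) (E : Type*) [NormedAddCommGroup E]
    [InnerProductSpace ℝ E] (hdim : Module.finrank ℝ E = D + 1)
    (e : Module.Basis (Fin (D + 1)) ℝ E) (b : Fin (D + 1) → E)
    (hb : ∀ i j, ⟪b i, e j⟫ = if i = j then 1 else 0)
    (i j : Fin (D + 1)) (hij : i ≠ j) :
    Real.sqrt (Matrix.det (Matrix.of fun a c : Fin (D + 1) => ⟪e a, e c⟫))
        * Real.sqrt (Matrix.det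
          (Matrix.of fun a c : {x : Fin (D + 1) // x ≠ i ∧ x ≠ j} => ⟪e a.1, e c.1⟫))
      = Real.sqrt (Matrix.det (Matrix.of fun a c : {x : Fin (D + 1) // x ≠ i} => ⟪e a.1, e c.1⟫))
        * Real.sqrt (Matrix.det
            (Matrix.of fun a c : {x : Fin (D + 1) // x ≠ j} => ⟪e a.1, e c.1⟫))
        * Real.sin (Real.arccos (-⟪b i, b j⟫ / (‖b i‖ * ‖b j‖))) :=
  stmt_2_general D E e b hb i j hij
end

section
/- Fix indices i ≠ j, and for g ∈ ℝ let M(g) be the symmetric matrix obtained from the Gram matrix (⟨e_a,e_b⟩)_{0≤a,b≤D} by replacing both entries (i,j) and (j,i) by g. Then the derivative of g ↦ det M(g) at g = ⟨e_i,e_j⟩ equals −2 𝒱_i 𝒱_j cos θ_{ij}. -/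
/-!
Expanding the determinant along rows `i` and `j` shows that `g ↦ det M(g)` is a quadratic
polynomial whose linear coefficient is the sum of the cofactors `adj(G)ⱼᵢ + adj(G)ᵢⱼ` of the
Gram matrix `G`. The Gram matrix of the dual basis is `G⁻¹`, so `adj G = det G • (⟪bₐ, b_c⟫)`:
the derivative is `2 det G ⟪bᵢ, bⱼ⟫`, and the principal minors are `𝒱ₖ² = det G ‖bₖ‖²`.
Since `-⟪bᵢ, bⱼ⟫ / (‖bᵢ‖ ‖bⱼ‖)` is the cosine of the angle between `-bᵢ` and `bⱼ`, the arccosine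
cancels and the two sides agree.
-/

open scoped RealInnerProductSpace

namespace Matrix

section Determinant

variable {n R : Type*} [DecidableEq n] [CommRing R]

theorem add_smul_single_add_single_eq_updateRow (A : Matrix n n R) {i j : n} (hij : i ≠ j)
    (t : R) :
    A + t • (single i j 1 + single j i 1) =
      (A.updateRow i (A i + t • Pi.single j 1)).updateRow j (A j + t • Pi.single i 1) := by
  ext a c
  rcases eq_or_ne a j with rfl | haj
  · simp [single_apply, Pi.single_apply, hij, eq_comm]
  rcases eq_or_ne a i with rfl | hai
  · simp [single_apply, Pi.single_apply, haj, haj.symm, eq_comm]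
  · simp [hai, haj, hai.symm, haj.symm]

theorem of_ite_eq_add_smul_single_add_single (A : Matrix n n R) {i j : n} (hij : i ≠ j)
    (hA : A j i = A i j) (g : R) :
    of (fun a c => if (a = i ∧ c = j) ∨ (a = j ∧ c = i) then g else A a c) =
      A + (g - A i j) • (single i j 1 + single j i 1) := by
  ext a c
  by_cases h : (a = i ∧ c = j) ∨ (a = j ∧ c = i)
  · rcases h with ⟨rfl, rfl⟩ | ⟨rfl, rfl⟩ <;> simp [hij, hij.symm, hA]
  · have hij_ne : ¬(i = a ∧ j = c) := fun ⟨h1, h2⟩ => h (.inl ⟨h1.symm, h2.symm⟩)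
    have hji_ne : ¬(j = a ∧ i = c) := fun ⟨h1, h2⟩ => h (.inr ⟨h1.symm, h2.symm⟩)
    simp [h, hij_ne, hji_ne]

variable [Fintype n]

theorem det_updateRow_add_smul_single (A : Matrix n n R) (i j : n) (t : R) :
    (A.updateRow i (A i + t • Pi.single j 1)).det = A.det + t * A.adjugate j i := by
  rw [det_updateRow_add, updateRow_eq_self, det_updateRow_smul, adjugate_apply]

theorem det_add_smul_single_add_single (A : Matrix n n R) {i j : n} (hij : i ≠ j) (t : R) :
    (A + t • (single i j 1 + single j i 1)).det =
      A.det + t * (A.adjugate j i + A.adjugate i j) +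
        t ^ 2 * (A.updateRow j (Pi.single i 1)).adjugate j i := by
  set B := A.updateRow i (A i + t • Pi.single j 1)
  have hBj : B j = A j := updateRow_ne hij.symm
  have hBi : (A.updateRow j (Pi.single i 1)) i = A i := updateRow_ne hij
  have hcofactor : B.adjugate i j =
      A.adjugate i j + t * (A.updateRow j (Pi.single i 1)).adjugate j i := by
    rw [adjugate_apply, updateRow_comm _ hij, ← hBi, det_updateRow_add_smul_single,
      ← adjugate_apply]
  rw [add_smul_single_add_single_eq_updateRow A hij, ← hBj, det_updateRow_add_smul_single,
    det_updateRow_add_smul_single, hcofactor]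
  ring

theorem hasDerivAt_det_add_smul_single_add_single {𝕜 : Type*} [NontriviallyNormedField 𝕜]
    (A : Matrix n n 𝕜) {i j : n} (hij : i ≠ j) :
    HasDerivAt (fun t : 𝕜 => (A + t • (single i j 1 + single j i 1)).det)
      (A.adjugate j i + A.adjugate i j) 0 := by
  simp_rw [det_add_smul_single_add_single A hij]
  simpa [add_assoc] using
    (((hasDerivAt_id (0 : 𝕜)).mul_const (A.adjugate j i + A.adjugate i j)).add
      ((hasDerivAt_pow 2 (0 : 𝕜)).mul_const
        ((A.updateRow j (Pi.single i 1)).adjugate j i))).const_add A.det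

theorem hasDerivAt_det_of_ite {𝕜 : Type*} [NontriviallyNormedField 𝕜] (A : Matrix n n 𝕜)
    {i j : n} (hij : i ≠ j) (hA : A j i = A i j) :
    HasDerivAt
      (fun g => (of fun a c => if (a = i ∧ c = j) ∨ (a = j ∧ c = i) then g else A a c).det)
      (A.adjugate j i + A.adjugate i j) (A i j) := by
  have h := hasDerivAt_det_add_smul_single_add_single A hij
  rw [← sub_self (A i j)] at h
  simp only [of_ite_eq_add_smul_single_add_single A hij hA]
  exact h.comp_sub_const _ _

theorem adjugate_eq_det_smul_of_mul_eq_one {A B : Matrix n n R} (h : B * A = 1) :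
    A.adjugate = A.det • B := by
  calc A.adjugate = B * A * A.adjugate := by rw [h, Matrix.one_mul]
    _ = A.det • B := by rw [Matrix.mul_assoc, mul_adjugate, Matrix.mul_smul, Matrix.mul_one]

theorem det_submatrix_subtype_ne {m : ℕ} (A : Matrix (Fin (m + 1)) (Fin (m + 1)) R)
    (k : Fin (m + 1)) :
    (A.submatrix (Subtype.val : {x // x ≠ k} → _) Subtype.val).det = A.adjugate k k := by
  rw [adjugate_fin_succ_eq_det_submatrix, Even.neg_one_pow ⟨k, rfl⟩, one_mul,
    ← det_submatrix_equiv_self (finSuccAboveEquiv k)]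
  rfl

end Determinant

section Gram

variable {ι E : Type*} [Fintype ι] [DecidableEq ι] [NormedAddCommGroup E]
  [InnerProductSpace ℝ E] (e : Module.Basis ι ℝ E) {b : ι → E}

theorem inner_dual_eq_repr (hb : ∀ i j, ⟪b i, e j⟫ = if i = j then 1 else 0) (i j : ι) :
    ⟪b i, b j⟫ = e.repr (b i) j := by
  conv_lhs => rw [← e.sum_repr (b i)]
  simp only [sum_inner, real_inner_smul_left]
  simp [real_inner_comm (b j), hb]

theorem gram_dual_mul_gram (hb : ∀ i j, ⟪b i, e j⟫ = if i = j then 1 else 0) :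
    gram ℝ b * gram ℝ e = 1 := by
  ext i j
  have hrepr : ∑ k, e.repr (b i) k * ⟪e k, e j⟫ = ⟪b i, e j⟫ := by
    conv_rhs => rw [← e.sum_repr (b i)]
    simp only [sum_inner, real_inner_smul_left]
  simp only [mul_apply, gram, of_apply, inner_dual_eq_repr e hb, hrepr, hb, one_apply]

theorem adjugate_gram_eq_det_smul_gram_dual
    (hb : ∀ i j, ⟪b i, e j⟫ = if i = j then 1 else 0) :
    (gram ℝ e).adjugate = (gram ℝ e).det • gram ℝ b :=
  adjugate_eq_det_smul_of_mul_eq_one (gram_dual_mul_gram e hb)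

end Gram

theorem sqrt_det_gram_subtype_ne {E : Type*} [NormedAddCommGroup E] [InnerProductSpace ℝ E]
    {m : ℕ} (e : Module.Basis (Fin (m + 1)) ℝ E) {b : Fin (m + 1) → E}
    (hb : ∀ i j, ⟪b i, e j⟫ = if i = j then 1 else 0) (k : Fin (m + 1)) :
    Real.sqrt (of fun a c : {x // x ≠ k} => ⟪e a.1, e c.1⟫).det =
      Real.sqrt (gram ℝ e).det * ‖b k‖ := by
  rw [show (of fun a c : {x // x ≠ k} => ⟪e a.1, e c.1⟫) =
    (gram ℝ e).submatrix Subtype.val Subtype.val from rfl, det_submatrix_subtype_ne,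
    adjugate_gram_eq_det_smul_gram_dual e hb]
  simp [gram]

end Matrix

theorem cos_arccos_neg_inner_div_norm_mul_norm {E : Type*} [NormedAddCommGroup E]
    [InnerProductSpace ℝ E] (x y : E) :
    Real.cos (Real.arccos (-⟪x, y⟫ / (‖x‖ * ‖y‖))) = -⟪x, y⟫ / (‖x‖ * ‖y‖) := by
  simpa [InnerProductGeometry.angle, inner_neg_left] using
    InnerProductGeometry.cos_angle (-x) y

theorem stmt_3_general (D : ℕ) (E : Type*) [NormedAddCommGroup E]
    [InnerProductSpace ℝ E]
    (e : Module.Basis (Fin (D + 1)) ℝ E) (b : Fin (D + 1) → E)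
    (hb : ∀ i j, ⟪b i, e j⟫ = if i = j then 1 else 0)
    (i j : Fin (D + 1)) (hij : i ≠ j) :
    deriv (fun g : ℝ => Matrix.det (Matrix.of fun a c : Fin (D + 1) =>
        if (a = i ∧ c = j) ∨ (a = j ∧ c = i) then g else ⟪e a, e c⟫)) ⟪e i, e j⟫
      = -2 * Real.sqrt (Matrix.det
            (Matrix.of fun a c : {x : Fin (D + 1) // x ≠ i} => ⟪e a.1, e c.1⟫))
          * Real.sqrt (Matrix.det
            (Matrix.of fun a c : {x : Fin (D + 1) // x ≠ j} => ⟪e a.1, e c.1⟫))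
          * Real.cos (Real.arccos (-⟪b i, b j⟫ / (‖b i‖ * ‖b j‖))) := by
  have hderiv := (Matrix.hasDerivAt_det_of_ite (Matrix.gram ℝ e) hij (real_inner_comm _ _)).deriv
  simp only [Matrix.gram_apply] at hderiv
  have hG := (Matrix.posSemidef_gram ℝ e).det_nonneg
  have hb_ne (k : Fin (D + 1)) : b k ≠ 0 := fun h0 => by simpa [h0] using hb k k
  rw [hderiv, Matrix.adjugate_gram_eq_det_smul_gram_dual e hb,
    Matrix.sqrt_det_gram_subtype_ne e hb, Matrix.sqrt_det_gram_subtype_ne e hb,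
    cos_arccos_neg_inner_div_norm_mul_norm]
  field_simp [hb_ne]
  rw [Real.sq_sqrt hG]
  simp [Matrix.gram_apply, real_inner_comm]
  ring

/-- For a basis `e₀,…,e_D` (`D ≥ 1`) of a real inner product space of
dimension `D+1` with dual basis `b₀,…,b_D`, and `i ≠ j`, let `M(g)` be the Gram matrix
of the `e_a` with both entries `(i,j)` and `(j,i)` replaced by `g`. Then the derivative
of `g ↦ det M(g)` at `g = ⟪eᵢ,eⱼ⟫` equals `−2 𝒱ᵢ 𝒱ⱼ cos θ_{ij}`, where
`θ_{ij} = arccos(−⟪bᵢ,bⱼ⟫/(‖bᵢ‖‖bⱼ‖))` and `𝒱ᵢ` is the square root of the Gram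
determinant of the family obtained by omitting `eᵢ`. -/
theorem stmt_3 (D : ℕ) (hD : 1 ≤ D) (E : Type*) [NormedAddCommGroup E]
    [InnerProductSpace ℝ E] (hdim : Module.finrank ℝ E = D + 1)
    (e : Module.Basis (Fin (D + 1)) ℝ E) (b : Fin (D + 1) → E)
    (hb : ∀ i j, ⟪b i, e j⟫ = if i = j then 1 else 0)
    (i j : Fin (D + 1)) (hij : i ≠ j) :
    deriv (fun g : ℝ => Matrix.det (Matrix.of fun a c : Fin (D + 1) =>
        if (a = i ∧ c = j) ∨ (a = j ∧ c = i) then g else ⟪e a, e c⟫)) ⟪e i, e j⟫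
      = -2 * Real.sqrt (Matrix.det
            (Matrix.of fun a c : {x : Fin (D + 1) // x ≠ i} => ⟪e a.1, e c.1⟫))
          * Real.sqrt (Matrix.det
            (Matrix.of fun a c : {x : Fin (D + 1) // x ≠ j} => ⟪e a.1, e c.1⟫))
          * Real.cos (Real.arccos (-⟪b i, b j⟫ / (‖b i‖ * ‖b j‖))) :=
  stmt_3_general D E e b hb i j hij
end

section
/- Let n ≥ 2, let M be a real symmetric positive-definite n×n matrix with all diagonal entries equal to 1, and fix indices i ≠ j. For l ∈ (0,π), let M(l) be the matrix obtained from M by replacing both entries (i,j) and (j,i) by cos l, and suppose M(l) is positive definite. Define θ(l) = arccos( −(M(l)⁻¹)_{ij} / √((M(l)⁻¹)_{ii} (M(l)⁻¹)_{jj}) ). Then θ is differentiable at l with θ'(l) = sin l · √( det M₀ / det M(l) ), where M₀ is the matrix obtained from M by deleting rows i,j and columns i,j (a matrix which does not depend on l). Geometrically: for a spherical simplex, the derivative of the interior dihedral angle θ_{ij} with respect to the edge length l_{ij} is 𝒱_{ij} sin l_{ij} / 𝒱. -/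
/-- The symmetric matrix obtained from `M` by replacing both entries `(i,j)` and `(j,i)`
by `g`. -/
def replaceSym {n : ℕ} (M : Matrix (Fin n) (Fin n) ℝ) (i j : Fin n) (g : ℝ) :
    Matrix (Fin n) (Fin n) ℝ :=
  Matrix.of fun a b => if (a = i ∧ b = j) ∨ (a = j ∧ b = i) then g else M a b

/-!
Reorder the indices as `{i, j}` followed by the rest. The Schur complement of the block `D` of
the remaining indices in `M(t)` is the `2 × 2` matrix `S(t) = [[c₁, t - q], [t - q, c₂]]`, where
only the off-diagonal entry depends on `t`. Hence `det M(t) = det D · (c₁ c₂ - (t - q)²)`, and the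
`{i, j}` block of `M(t)⁻¹` is `S(t)⁻¹`, so near `l` the angle is `arccos ((cos x - q) / √(c₁ c₂))`,
whose derivative at `l` is `sin l / √(c₁ c₂ - (cos l - q)²) = sin l · √(det D / det M(l))`.
-/

open Matrix Topology Real

lemma neg_inv_apply_div_sqrt_fin_two {a b d : ℝ} (h : 0 < a * d - b ^ 2) :
    -(!![a, b; b, d]⁻¹ 0 1) / √(!![a, b; b, d]⁻¹ 0 0 * !![a, b; b, d]⁻¹ 1 1) =
      b / √(a * d) := by
  have hinv : !![a, b; b, d]⁻¹ = (a * d - b ^ 2)⁻¹ • !![d, -b; -b, a] := by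
    rw [inv_def, adjugate_fin_two_of, det_fin_two_of, Ring.inverse_eq_inv, sq]
  have hδ : 0 < (a * d - b ^ 2)⁻¹ := inv_pos.mpr h
  simp only [hinv, Matrix.smul_apply, of_apply, cons_val', cons_val_zero, cons_val_one, empty_val',
    cons_val_fin_one, smul_eq_mul]
  rw [show (a * d - b ^ 2)⁻¹ * d * ((a * d - b ^ 2)⁻¹ * a) = ((a * d - b ^ 2)⁻¹) ^ 2 * (a * d)
    by ring, sqrt_mul (sq_nonneg _), sqrt_sq hδ.le]
  field_simp

lemma hasDerivAt_arccos_cos_sub_div_sqrt {c q l : ℝ} (h : (cos l - q) ^ 2 < c) :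
    HasDerivAt (fun x => arccos ((cos x - q) / √c)) (sin l / √(c - (cos l - q) ^ 2)) l := by
  have hc : 0 < c := (sq_nonneg _).trans_lt h
  have hsq : ((cos l - q) / √c) ^ 2 < 1 := by
    rwa [div_pow, sq_sqrt hc.le, div_lt_one hc]
  have hne₁ : (cos l - q) / √c ≠ -1 := fun h' => by simp [h'] at hsq
  have hne₂ : (cos l - q) / √c ≠ 1 := fun h' => by simp [h'] at hsq
  refine ((hasDerivAt_arccos hne₁ hne₂).comp l
    (((hasDerivAt_cos l).sub_const q).div_const √c)).congr_deriv ?_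
  rw [div_pow, sq_sqrt hc.le, one_sub_div hc.ne', sqrt_div' _ hc.le]
  field_simp

section PairBlocks

def pairSumComplEquiv {n : ℕ} {i j : Fin n} (hij : i ≠ j) :
    (Fin 2 ⊕ {x : Fin n // x ≠ i ∧ x ≠ j}) ≃ Fin n where
  toFun := Sum.elim ![i, j] Subtype.val
  invFun x := if h₁ : x = i then .inl 0 else if h₂ : x = j then .inl 1 else .inr ⟨x, h₁, h₂⟩
  left_inv := by
    rintro (a | s)
    · fin_cases a <;> simp [hij.symm]
    · simp [s.2.1, s.2.2]
  right_inv x := by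
    by_cases h₁ : x = i
    · simp [h₁]
    · by_cases h₂ : x = j <;> simp [h₁, h₂, hij.symm]

variable {n : ℕ} (M : Matrix (Fin n) (Fin n) ℝ) (i j : Fin n)

def pairRows : Matrix (Fin 2) {x : Fin n // x ≠ i ∧ x ≠ j} ℝ :=
  Matrix.of fun a s => M (![i, j] a) s.1

def complMinor : Matrix {x : Fin n // x ≠ i ∧ x ≠ j} {x : Fin n // x ≠ i ∧ x ≠ j} ℝ :=
  Matrix.of fun a b => M a.1 b.1

noncomputable def pairGram : Matrix (Fin 2) (Fin 2) ℝ :=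
  pairRows M i j * (complMinor M i j)⁻¹ * (pairRows M i j)ᵀ

noncomputable def schurCompl (t : ℝ) : Matrix (Fin 2) (Fin 2) ℝ :=
  !![M i i, t; t, M j j] - pairGram M i j

variable {M i j}

lemma submatrix_replaceSym_eq_fromBlocks (hij : i ≠ j) (hM : M.IsSymm) (t : ℝ) :
    (replaceSym M i j t).submatrix (pairSumComplEquiv hij) (pairSumComplEquiv hij) =
      fromBlocks !![M i i, t; t, M j j] (pairRows M i j) (pairRows M i j)ᵀ
        (complMinor M i j) := by
  ext (a | s) (b | s')
  · fin_cases a <;> fin_cases b <;>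
      simp [pairSumComplEquiv, replaceSym, hij, hij.symm]
  · fin_cases a <;>
      simp [pairSumComplEquiv, replaceSym, pairRows, s'.2.1, s'.2.2, hij.symm]
  · fin_cases b <;>
      simp [pairSumComplEquiv, replaceSym, pairRows, s.2.1, s.2.2, hM.apply, hij]
  · simp [pairSumComplEquiv, replaceSym, complMinor, s.2.1, s.2.2]

lemma det_replaceSym (hij : i ≠ j) (hM : M.IsSymm) (hD : IsUnit (complMinor M i j).det)
    (t : ℝ) : (replaceSym M i j t).det = (complMinor M i j).det * (schurCompl M i j t).det := by
  let := (complMinor M i j).invertibleOfIsUnitDet hD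
  rw [← det_submatrix_equiv_self (pairSumComplEquiv hij),
    submatrix_replaceSym_eq_fromBlocks hij hM, det_fromBlocks₂₂, invOf_eq_nonsing_inv]
  rfl

lemma inv_replaceSym_apply_pair (hij : i ≠ j) (hM : M.IsSymm)
    (hD : IsUnit (complMinor M i j).det) (t : ℝ) (hS : IsUnit (schurCompl M i j t).det)
    (a b : Fin 2) :
    (replaceSym M i j t)⁻¹ (![i, j] a) (![i, j] b) = (schurCompl M i j t)⁻¹ a b := by
  let := (complMinor M i j).invertibleOfIsUnitDet hD
  let : Invertible (!![M i i, t; t, M j j] - pairRows M i j * ⅟(complMinor M i j) *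
    (pairRows M i j)ᵀ) := (schurCompl M i j t).invertibleOfIsUnitDet hS
  let := fromBlocks₂₂Invertible !![M i i, t; t, M j j] (pairRows M i j) (pairRows M i j)ᵀ
    (complMinor M i j)
  calc (replaceSym M i j t)⁻¹ (![i, j] a) (![i, j] b)
      = ((replaceSym M i j t).submatrix (pairSumComplEquiv hij) (pairSumComplEquiv hij))⁻¹
          (.inl a) (.inl b) := by rw [inv_submatrix_equiv]; rfl
    _ = (schurCompl M i j t)⁻¹ a b := by
      rw [submatrix_replaceSym_eq_fromBlocks hij hM, ← invOf_eq_nonsing_inv,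
        invOf_fromBlocks₂₂_eq, fromBlocks_apply₁₁]
      rfl

lemma schurCompl_eq (hM : M.IsSymm) (t : ℝ) :
    schurCompl M i j t = !![M i i - pairGram M i j 0 0, t - pairGram M i j 0 1;
      t - pairGram M i j 0 1, M j j - pairGram M i j 1 1] := by
  have hDT : (complMinor M i j)ᵀ = complMinor M i j := by
    ext a b; exact hM.apply a.1 b.1
  have hG : (pairGram M i j)ᵀ = pairGram M i j := by
    rw [pairGram, transpose_mul, transpose_mul, transpose_transpose, transpose_nonsing_inv, hDT,
      Matrix.mul_assoc]
  have hG₁₀ : pairGram M i j 1 0 = pairGram M i j 0 1 := congrFun (congrFun hG 0) 1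
  ext a b
  fin_cases a <;> fin_cases b <;> simp [schurCompl, hG₁₀]

lemma det_schurCompl (hM : M.IsSymm) (t : ℝ) :
    (schurCompl M i j t).det = (M i i - pairGram M i j 0 0) * (M j j - pairGram M i j 1 1) -
      (t - pairGram M i j 0 1) ^ 2 := by
  rw [schurCompl_eq hM, det_fin_two_of]
  ring

lemma neg_inv_replaceSym_div_sqrt (hij : i ≠ j) (hM : M.IsSymm)
    (hD : IsUnit (complMinor M i j).det) (t : ℝ) (hS : 0 < (schurCompl M i j t).det) :
    -((replaceSym M i j t)⁻¹ i j) /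
        √((replaceSym M i j t)⁻¹ i i * (replaceSym M i j t)⁻¹ j j) =
      (t - pairGram M i j 0 1) /
        √((M i i - pairGram M i j 0 0) * (M j j - pairGram M i j 1 1)) := by
  have hinv := inv_replaceSym_apply_pair hij hM hD t hS.ne'.isUnit
  have hij' : (replaceSym M i j t)⁻¹ i j = (schurCompl M i j t)⁻¹ 0 1 := hinv 0 1
  have hii : (replaceSym M i j t)⁻¹ i i = (schurCompl M i j t)⁻¹ 0 0 := hinv 0 0
  have hjj : (replaceSym M i j t)⁻¹ j j = (schurCompl M i j t)⁻¹ 1 1 := hinv 1 1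
  rw [hij', hii, hjj, schurCompl_eq hM]
  rw [det_schurCompl hM] at hS
  exact neg_inv_apply_div_sqrt_fin_two hS

end PairBlocks

theorem stmt_5_general (n : ℕ) (M : Matrix (Fin n) (Fin n) ℝ)
    (hM : M.IsSymm) (hMpos : M.PosDef)
    (i j : Fin n) (hij : i ≠ j) (l : ℝ)
    (hpos : (replaceSym M i j (Real.cos l)).PosDef) :
    HasDerivAt (fun x : ℝ =>
        Real.arccos (-((replaceSym M i j (Real.cos x))⁻¹ i j)
          / Real.sqrt ((replaceSym M i j (Real.cos x))⁻¹ i i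
              * (replaceSym M i j (Real.cos x))⁻¹ j j)))
      (Real.sin l * Real.sqrt
        (Matrix.det (Matrix.of fun a b : {x : Fin n // x ≠ i ∧ x ≠ j} => M a.1 b.1)
          / Matrix.det (replaceSym M i j (Real.cos l)))) l := by
  set G := pairGram M i j
  set c := (M i i - G 0 0) * (M j j - G 1 1)
  set D := complMinor M i j
  have hD : 0 < D.det := (hMpos.submatrix Subtype.val_injective).det_pos
  have hdet (t : ℝ) : (replaceSym M i j t).det = D.det * (c - (t - G 0 1) ^ 2) := by
    rw [det_replaceSym hij hM hD.ne'.isUnit, det_schurCompl hM]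
  have hdisc : (cos l - G 0 1) ^ 2 < c := by
    have := hpos.det_pos
    rw [hdet] at this
    linarith [pos_of_mul_pos_right this hD.le]
  have hnear : ∀ᶠ x in 𝓝 l, (cos x - G 0 1) ^ 2 < c :=
    (by fun_prop : Continuous fun x => (cos x - G 0 1) ^ 2).continuousAt.eventually_lt
      continuousAt_const hdisc
  have hθ : (fun x => arccos (-((replaceSym M i j (cos x))⁻¹ i j) /
        √((replaceSym M i j (cos x))⁻¹ i i * (replaceSym M i j (cos x))⁻¹ j j)))
      =ᶠ[𝓝 l] fun x => arccos ((cos x - G 0 1) / √c) :=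
    hnear.mono fun x hx => by
      beta_reduce
      rw [neg_inv_replaceSym_div_sqrt hij hM hD.ne'.isUnit _ (by rw [det_schurCompl hM]; linarith)]
  have hval : sin l / √(c - (cos l - G 0 1) ^ 2) =
      sin l * √(D.det / (replaceSym M i j (cos l)).det) := by
    rw [hdet, div_mul_cancel_left₀ hD.ne', sqrt_inv, div_eq_mul_inv]
  exact hval ▸ (hasDerivAt_arccos_cos_sub_div_sqrt hdisc).congr_of_eventuallyEq hθ

/-- Let `M` be a real symmetric positive-definite `n×n` matrix (`n ≥ 2`) with
unit diagonal, `i ≠ j`, and `l ∈ (0,π)` such that `M(l)` (the matrix with entries `(i,j)`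
and `(j,i)` replaced by `cos l`) is positive definite. Then
`θ(l) = arccos(−(M(l)⁻¹)_{ij}/√((M(l)⁻¹)_{ii}(M(l)⁻¹)_{jj}))` is differentiable at `l`
with derivative `sin l · √(det M₀ / det M(l))`, where `M₀` is `M` with rows and columns
`i, j` deleted. -/
theorem stmt_5 (n : ℕ) (hn : 2 ≤ n) (M : Matrix (Fin n) (Fin n) ℝ)
    (hM : M.IsSymm) (hMpos : M.PosDef) (hdiag : ∀ a, M a a = 1)
    (i j : Fin n) (hij : i ≠ j) (l : ℝ) (hl : l ∈ Set.Ioo 0 Real.pi)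
    (hpos : (replaceSym M i j (Real.cos l)).PosDef) :
    HasDerivAt (fun x : ℝ =>
        Real.arccos (-((replaceSym M i j (Real.cos x))⁻¹ i j)
          / Real.sqrt ((replaceSym M i j (Real.cos x))⁻¹ i i
              * (replaceSym M i j (Real.cos x))⁻¹ j j)))
      (Real.sin l * Real.sqrt
        (Matrix.det (Matrix.of fun a b : {x : Fin n // x ≠ i ∧ x ≠ j} => M a.1 b.1)
          / Matrix.det (replaceSym M i j (Real.cos l)))) l :=
  stmt_5_general n M hM hMpos i j hij l hpos
end

section
/- Let x₁, …, x_D ∈ ℝ^D and define φ : ℝ^D → ℝ^D by φ(y) = (dist(y,x₁), …, dist(y,x_D)). Then φ is differentiable at every y ∉ {x₁,…,x_D}, and the absolute value of the Jacobian determinant of φ at such y equals |det(y − x₁, …, y − x_D)| / ∏_{i=1}^D dist(y, x_i), where det(y − x₁, …, y − x_D) is the determinant of the D×D matrix whose i-th column is y − x_i. -/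
/-!
The gradient of `z ↦ dist z xᵢ` at `y ≠ xᵢ` is the unit vector `(y - xᵢ) / dist y xᵢ`, so the
Jacobian matrix of `φ` at `y` has these unit vectors as rows. Pulling the factors
`(dist y xᵢ)⁻¹` out of the determinant leaves `det (y - x₁, …, y - x_D)`.
-/

open Finset

section DistanceMap

variable {E : Type*} [NormedAddCommGroup E] [InnerProductSpace ℝ E]

theorem hasFDerivAt_dist_left {y p : E} (hy : y ≠ p) :
    HasFDerivAt (fun z => dist z p) (innerSL ℝ ((dist y p)⁻¹ • (y - p))) y := by
  have hd : dist y p ≠ 0 := dist_ne_zero.mpr hy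
  have hsq : HasFDerivAt (fun z => ‖z - p‖ ^ 2) (2 • innerSL ℝ (y - p)) y := by
    simpa using ((hasFDerivAt_id y).sub_const p).norm_sq
  have hsqrt := hsq.sqrt (by simpa [← dist_eq_norm] using hd)
  simp only [← dist_eq_norm, Real.sqrt_sq dist_nonneg] at hsqrt
  refine hsqrt.congr_fderiv ?_
  ext v
  simp only [one_div, mul_inv_rev, map_sub, smul_apply, sub_apply, innerSL_apply_apply,
    nsmul_eq_mul, Nat.cast_ofNat, smul_eq_mul, map_smul]
  field_simp

theorem hasFDerivAt_dist_pi {ι : Type*} [Fintype ι] {x : ι → E} {y : E}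
    (hy : y ∉ Set.range x) :
    HasFDerivAt (fun z => (WithLp.equiv 2 (ι → ℝ)).symm fun i => dist z (x i))
      ((EuclideanSpace.equiv ι ℝ).symm.toContinuousLinearMap ∘L
        .pi fun i => innerSL ℝ ((dist y (x i))⁻¹ • (y - x i))) y :=
  (EuclideanSpace.equiv ι ℝ).symm.hasFDerivAt.comp y <| hasFDerivAt_pi.mpr fun i =>
    hasFDerivAt_dist_left fun h => hy ⟨i, h.symm⟩

end DistanceMap

theorem det_pi_innerSL {ι : Type*} [Fintype ι] [DecidableEq ι] (u : ι → EuclideanSpace ℝ ι) :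
    LinearMap.det ((EuclideanSpace.equiv ι ℝ).symm.toContinuousLinearMap ∘L
        .pi fun i => innerSL ℝ (u i)).toLinearMap = (Matrix.of fun a i => u i a).det := by
  rw [← LinearMap.det_toMatrix (EuclideanSpace.basisFun ι ℝ).toBasis, ← Matrix.det_transpose]
  congr 1
  ext i a
  simp [LinearMap.toMatrix_apply, EuclideanSpace.inner_single_right]

/-- Let `x₁, …, x_D ∈ ℝ^D` and `φ(y) = (dist(y,x₁), …, dist(y,x_D))`. Then
`φ` is differentiable at every `y ∉ {x₁,…,x_D}`, and the absolute value of its Jacobian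
determinant there equals `|det(y − x₁, …, y − x_D)| / ∏ᵢ dist(y, xᵢ)`. -/
theorem stmt_8 (D : ℕ) (x : Fin D → EuclideanSpace ℝ (Fin D))
    (y : EuclideanSpace ℝ (Fin D)) (hy : y ∉ Set.range x) :
    DifferentiableAt ℝ
      (fun z : EuclideanSpace ℝ (Fin D) =>
        ((WithLp.equiv 2 (Fin D → ℝ)).symm fun i => dist z (x i))) y ∧
    |LinearMap.det (fderiv ℝ
        (fun z : EuclideanSpace ℝ (Fin D) =>
          ((WithLp.equiv 2 (Fin D → ℝ)).symm fun i => dist z (x i))) y).toLinearMap|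
      = |Matrix.det (Matrix.of fun a i : Fin D => (y - x i) a)| / ∏ i, dist y (x i) := by
  have hφ := hasFDerivAt_dist_pi hy
  refine ⟨hφ.differentiableAt, ?_⟩
  have hscale : (Matrix.of fun a i => ((dist y (x i))⁻¹ • (y - x i)) a) =
      Matrix.of fun a i => (dist y (x i))⁻¹ * Matrix.of (fun a i => (y - x i) a) a i := rfl
  rw [hφ.fderiv, det_pi_innerSL, hscale, Matrix.det_mul_row, abs_mul, prod_inv_distrib,
    abs_inv, abs_of_nonneg (prod_nonneg fun i _ => dist_nonneg), inv_mul_eq_div]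
end

section
/- Let t₁₂, t₂₃, t₃₁ ∈ (0,π) be such that the 3×3 matrix with unit diagonal and off-diagonal entries cos t_{ij} is positive definite, and for each vertex k ∈ {1,2,3} with {i,j,k} = {1,2,3} let φ_k ∈ (0,π) be the exterior angle defined by cos φ_k = (cos t_{ki} cos t_{kj} − cos t_{ij})/(sin t_{ki} sin t_{kj}). Then h_{φ₁} a_{t₁₂} h_{φ₂} a_{t₂₃} h_{φ₃} a_{t₃₁} = −I₂, and h_{2π−φ₁} a_{t₁₂} h_{2π−φ₂} a_{t₂₃} h_{2π−φ₃} a_{t₃₁} = +I₂, where I₂ is the 2×2 identity matrix. -/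
open Real

/-- `h_ξ = diag(e^{iξ/2}, e^{−iξ/2}) ∈ SU(2)`. -/
noncomputable def hMat (ξ : ℝ) : Matrix (Fin 2) (Fin 2) ℂ :=
  !![Complex.exp ((ξ : ℂ) * Complex.I / 2), 0; 0, Complex.exp (-((ξ : ℂ) * Complex.I) / 2)]

/-- `a_θ = [[cos(θ/2), sin(θ/2)], [−sin(θ/2), cos(θ/2)]] ∈ SU(2)`. -/
noncomputable def aMat (θ : ℝ) : Matrix (Fin 2) (Fin 2) ℂ :=
  !![(Real.cos (θ / 2) : ℂ), (Real.sin (θ / 2) : ℂ);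
     (-Real.sin (θ / 2) : ℂ), (Real.cos (θ / 2) : ℂ)]

/-- The exterior angle at a vertex of a spherical triangle whose adjacent sides have
lengths `tki, tkj` and whose opposite side has length `tij`. -/
noncomputable def extAngle (tki tkj tij : ℝ) : ℝ :=
  Real.arccos ((Real.cos tki * Real.cos tkj - Real.cos tij) / (Real.sin tki * Real.sin tkj))

lemma hMat_eq (ξ : ℝ) :
    hMat ξ = !![(Real.cos (ξ/2) : ℂ) + Real.sin (ξ/2) * Complex.I, 0;
         0, (Real.cos (ξ/2) : ℂ) - Real.sin (ξ/2) * Complex.I] := by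
  have h1 : (ξ : ℂ) * Complex.I / 2 = ((ξ/2 : ℝ) : ℂ) * Complex.I := by push_cast; ring
  have h2 : -((ξ : ℂ) * Complex.I) / 2 = ((-(ξ/2) : ℝ) : ℂ) * Complex.I := by push_cast; ring
  rw [hMat, h1, h2, Complex.exp_mul_I, Complex.exp_mul_I,
    ← Complex.ofReal_cos, ← Complex.ofReal_sin, ← Complex.ofReal_cos, ← Complex.ofReal_sin,
    Real.cos_neg, Real.sin_neg]
  push_cast
  ring_nf

lemma aux_prod (f1 f2 f3 t1 t2 t3 : ℝ)
    (E1 : cos (f2/2) * (cos (t1/2) * cos (t2/2) - sin (t1/2) * sin (t2/2))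
       = -(cos (t3/2) * (cos (f1/2) * cos (f3/2) - sin (f1/2) * sin (f3/2))))
    (E2 : sin (f2/2) * (cos (t1/2) * cos (t2/2) + sin (t1/2) * sin (t2/2))
       = cos (t3/2) * (cos (f1/2) * sin (f3/2) + sin (f1/2) * cos (f3/2)))
    (E3 : cos (f2/2) * (cos (t1/2) * sin (t2/2) + sin (t1/2) * cos (t2/2))
       = sin (t3/2) * (cos (f1/2) * cos (f3/2) + sin (f1/2) * sin (f3/2)))
    (E4 : sin (f2/2) * (cos (t1/2) * sin (t2/2) - sin (t1/2) * cos (t2/2))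
       = sin (t3/2) * (cos (f1/2) * sin (f3/2) - sin (f1/2) * cos (f3/2))) :
    hMat f1 * aMat t1 * hMat f2 * aMat t2 * hMat f3 * aMat t3 = -1 := by
  set u1 := cos (f1/2); set v1 := sin (f1/2)
  set u2 := cos (f2/2); set v2 := sin (f2/2)
  set u3 := cos (f3/2); set v3 := sin (f3/2)
  set C1 := cos (t1/2); set S1 := sin (t1/2)
  set C2 := cos (t2/2); set S2 := sin (t2/2)
  set C3 := cos (t3/2); set S3 := sin (t3/2)
  have n1 : u1^2 + v1^2 = 1 := by rw [add_comm]; exact sin_sq_add_cos_sq _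
  have n3 : u3^2 + v3^2 = 1 := by rw [add_comm]; exact sin_sq_add_cos_sq _
  have nC : C3^2 + S3^2 = 1 := by rw [add_comm]; exact sin_sq_add_cos_sq _
  have n1c : (u1:ℂ)^2 + (v1:ℂ)^2 = 1 := by exact_mod_cast n1
  have n3c : (u3:ℂ)^2 + (v3:ℂ)^2 = 1 := by exact_mod_cast n3
  have nCc : (C3:ℂ)^2 + (S3:ℂ)^2 = 1 := by exact_mod_cast nC
  have E1c : (u2:ℂ) * ((C1:ℂ)*C2 - (S1:ℂ)*S2)
      = -((C3:ℂ) * ((u1:ℂ)*u3 - (v1:ℂ)*v3)) := by exact_mod_cast E1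
  have E2c : (v2:ℂ) * ((C1:ℂ)*C2 + (S1:ℂ)*S2)
      = (C3:ℂ) * ((u1:ℂ)*v3 + (v1:ℂ)*u3) := by exact_mod_cast E2
  have E3c : (u2:ℂ) * ((C1:ℂ)*S2 + (S1:ℂ)*C2)
      = (S3:ℂ) * ((u1:ℂ)*u3 + (v1:ℂ)*v3) := by exact_mod_cast E3
  have E4c : (v2:ℂ) * ((C1:ℂ)*S2 - (S1:ℂ)*C2)
      = (S3:ℂ) * ((u1:ℂ)*v3 - (v1:ℂ)*u3) := by exact_mod_cast E4
  have hA1 : aMat t1 = !![(C1:ℂ), S1; -S1, C1] := by rw [aMat]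
  have hA2 : aMat t2 = !![(C2:ℂ), S2; -S2, C2] := by rw [aMat]
  have hA3 : aMat t3 = !![(C3:ℂ), S3; -S3, C3] := by rw [aMat]
  rw [hMat_eq, hMat_eq, hMat_eq, hA1, hA2, hA3]
  set e1 : ℂ := (u1:ℂ) + v1 * Complex.I
  set e1' : ℂ := (u1:ℂ) - v1 * Complex.I
  set e2 : ℂ := (u2:ℂ) + v2 * Complex.I
  set e2' : ℂ := (u2:ℂ) - v2 * Complex.I
  set e3 : ℂ := (u3:ℂ) + v3 * Complex.I
  set e3' : ℂ := (u3:ℂ) - v3 * Complex.I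
  have key : (!![(C1:ℂ), S1; -S1, C1] : Matrix (Fin 2) (Fin 2) ℂ) * !![e2, 0; 0, e2']
        * !![(C2:ℂ), S2; -S2, C2]
      = !![e1', 0; 0, e1] * !![-(C3:ℂ), S3; -S3, -C3] * !![e3', 0; 0, e3] := by
    ext i j
    fin_cases i <;> fin_cases j <;>
      simp [Matrix.mul_apply, Fin.sum_univ_two, e1, e1', e2, e2', e3, e3'] <;>
      first
        | linear_combination E1c + Complex.I * E2c + (C3:ℂ)*v1*v3 * Complex.I_sq
        | linear_combination E3c + Complex.I * E4c + (S3:ℂ)*v1*v3 * Complex.I_sq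
        | linear_combination -E3c + Complex.I * E4c - (S3:ℂ)*v1*v3 * Complex.I_sq
        | linear_combination E1c - Complex.I * E2c + (C3:ℂ)*v1*v3 * Complex.I_sq
  have hH1 : (!![e1, 0; 0, e1'] : Matrix (Fin 2) (Fin 2) ℂ) * !![e1', 0; 0, e1] = 1 := by
    ext i j
    fin_cases i <;> fin_cases j <;>
      simp [Matrix.mul_apply, Fin.sum_univ_two, Matrix.one_apply, e1, e1'] <;>
      linear_combination n1c - (v1:ℂ)^2 * Complex.I_sq
  have hH3 : (!![e3', 0; 0, e3] : Matrix (Fin 2) (Fin 2) ℂ) * !![e3, 0; 0, e3'] = 1 := by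
    ext i j
    fin_cases i <;> fin_cases j <;>
      simp [Matrix.mul_apply, Fin.sum_univ_two, Matrix.one_apply, e3, e3'] <;>
      linear_combination n3c - (v3:ℂ)^2 * Complex.I_sq
  have hNA : (!![-(C3:ℂ), S3; -S3, -C3] : Matrix (Fin 2) (Fin 2) ℂ) * !![(C3:ℂ), S3; -S3, C3]
      = -1 := by
    ext i j
    fin_cases i <;> fin_cases j <;>
      simp [Matrix.mul_apply, Fin.sum_univ_two, Matrix.one_apply] <;>
      first | linear_combination -nCc | ring
  calc !![e1, 0; 0, e1'] * !![(C1:ℂ), S1; -S1, C1] * !![e2, 0; 0, e2']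
        * !![(C2:ℂ), S2; -S2, C2] * !![e3, 0; 0, e3'] * !![(C3:ℂ), S3; -S3, C3]
      = !![e1, 0; 0, e1'] * (!![(C1:ℂ), S1; -S1, C1] * !![e2, 0; 0, e2']
          * !![(C2:ℂ), S2; -S2, C2]) * (!![e3, 0; 0, e3'] * !![(C3:ℂ), S3; -S3, C3]) := by
        simp only [Matrix.mul_assoc]
    _ = !![e1, 0; 0, e1'] * (!![e1', 0; 0, e1] * !![-(C3:ℂ), S3; -S3, -C3] * !![e3', 0; 0, e3])
          * (!![e3, 0; 0, e3'] * !![(C3:ℂ), S3; -S3, C3]) := by rw [key]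
    _ = (!![e1, 0; 0, e1'] * !![e1', 0; 0, e1]) * !![-(C3:ℂ), S3; -S3, -C3]
          * (!![e3', 0; 0, e3] * !![e3, 0; 0, e3']) * !![(C3:ℂ), S3; -S3, C3] := by
        simp only [Matrix.mul_assoc]
    _ = !![-(C3:ℂ), S3; -S3, -C3] * !![(C3:ℂ), S3; -S3, C3] := by
        rw [hH1, hH3, Matrix.one_mul, Matrix.mul_one]
    _ = -1 := hNA

lemma aux_prod2 (f1 f2 f3 t1 t2 t3 : ℝ)
    (E1 : cos (f2/2) * (cos (t1/2) * cos (t2/2) - sin (t1/2) * sin (t2/2))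
       = -(cos (t3/2) * (cos (f1/2) * cos (f3/2) - sin (f1/2) * sin (f3/2))))
    (E2 : sin (f2/2) * (cos (t1/2) * cos (t2/2) + sin (t1/2) * sin (t2/2))
       = cos (t3/2) * (cos (f1/2) * sin (f3/2) + sin (f1/2) * cos (f3/2)))
    (E3 : cos (f2/2) * (cos (t1/2) * sin (t2/2) + sin (t1/2) * cos (t2/2))
       = sin (t3/2) * (cos (f1/2) * cos (f3/2) + sin (f1/2) * sin (f3/2)))
    (E4 : sin (f2/2) * (cos (t1/2) * sin (t2/2) - sin (t1/2) * cos (t2/2))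
       = sin (t3/2) * (cos (f1/2) * sin (f3/2) - sin (f1/2) * cos (f3/2))) :
    hMat (2*π - f1) * aMat t1 * hMat (2*π - f2) * aMat t2 * hMat (2*π - f3) * aMat t3 = 1 := by
  have base := aux_prod f1 f2 f3 t1 t2 t3 E1 E2 E3 E4
  have hconj : ∀ ξ : ℝ, hMat (2*π - ξ) = -(hMat ξ).map (starRingEnd ℂ) := by
    intro ξ
    have k1 : Complex.exp (((2*π - ξ : ℝ) : ℂ) * Complex.I / 2)
        = -Complex.exp (-((ξ:ℂ) * Complex.I) / 2) := by
      rw [show (((2*π - ξ : ℝ)):ℂ) * Complex.I / 2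
          = ↑π * Complex.I + -((ξ:ℂ) * Complex.I) / 2 by push_cast; ring,
        Complex.exp_add, Complex.exp_pi_mul_I]
      ring
    have k2 : Complex.exp (-((((2*π - ξ : ℝ)):ℂ) * Complex.I) / 2)
        = -Complex.exp ((ξ:ℂ) * Complex.I / 2) := by
      rw [show -((((2*π - ξ : ℝ)):ℂ) * Complex.I) / 2
          = ↑π * Complex.I + (ξ:ℂ) * Complex.I / 2 + -(2 * ↑π * Complex.I) by push_cast; ring,
        Complex.exp_add, Complex.exp_add, Complex.exp_neg, Complex.exp_two_pi_mul_I,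
        Complex.exp_pi_mul_I]
      simp
    have c1 : (starRingEnd ℂ) (Complex.exp ((ξ:ℂ) * Complex.I / 2))
        = Complex.exp (-((ξ:ℂ) * Complex.I) / 2) := by
      rw [← Complex.exp_conj]
      congr 1
      rw [map_div₀, map_mul, Complex.conj_I, Complex.conj_ofReal, map_ofNat]
      ring
    have c2 : (starRingEnd ℂ) (Complex.exp (-((ξ:ℂ) * Complex.I) / 2))
        = Complex.exp ((ξ:ℂ) * Complex.I / 2) := by
      rw [← Complex.exp_conj]
      congr 1
      rw [map_div₀, map_neg, map_mul, Complex.conj_I, Complex.conj_ofReal, map_ofNat]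
      ring
    rw [hMat, hMat, k1, k2]
    ext i j
    fin_cases i <;> fin_cases j <;> simp [Matrix.map_apply, c1, c2]
  have haconj : ∀ θ : ℝ, (aMat θ).map (starRingEnd ℂ) = aMat θ := by
    intro θ; ext i j
    fin_cases i <;> fin_cases j <;>
      simp [aMat, Matrix.map_apply, ← Complex.ofReal_cos, ← Complex.ofReal_sin,
        Complex.conj_ofReal]
  have hneg1 : ((-1 : Matrix (Fin 2) (Fin 2) ℂ)).map (starRingEnd ℂ) = -1 := by
    ext i j
    fin_cases i <;> fin_cases j <;>
      simp [Matrix.map_apply, Matrix.one_apply]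
  rw [hconj f1, hconj f2, hconj f3, ← haconj t1, ← haconj t2, ← haconj t3]
  simp only [Matrix.neg_mul, Matrix.mul_neg, neg_neg]
  rw [← Matrix.map_mul, ← Matrix.map_mul, ← Matrix.map_mul, ← Matrix.map_mul, ← Matrix.map_mul,
    base, hneg1, neg_neg]

lemma half_facts {p : ℝ} (hm : -1 < p) (hM : p < 1) :
    0 < Real.cos (Real.arccos p / 2) ∧ 0 < Real.sin (Real.arccos p / 2) ∧
    2 * Real.cos (Real.arccos p / 2) ^ 2 = 1 + p ∧
    2 * Real.sin (Real.arccos p / 2) ^ 2 = 1 - p ∧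
    2 * (Real.cos (Real.arccos p / 2) * Real.sin (Real.arccos p / 2))
      = Real.sqrt (1 - p ^ 2) := by
  have h0 : 0 < Real.arccos p := Real.arccos_pos.2 hM
  have h1 : Real.arccos p < π := lt_of_le_of_ne (Real.arccos_le_pi p)
    (by rw [Ne, Real.arccos_eq_pi]; exact not_le.2 hm)
  have hc : Real.cos (Real.arccos p) = p := Real.cos_arccos hm.le hM.le
  have hcc : Real.cos (2 * (Real.arccos p / 2)) = p := by
    rw [show 2 * (Real.arccos p / 2) = Real.arccos p by ring, hc]
  have hss : Real.sin (2 * (Real.arccos p / 2)) = Real.sqrt (1 - p ^ 2) := by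
    rw [show 2 * (Real.arccos p / 2) = Real.arccos p by ring, Real.sin_arccos]
  refine ⟨?_, ?_, ?_, ?_, ?_⟩
  · exact Real.cos_pos_of_mem_Ioo ⟨by nlinarith [Real.pi_pos], by nlinarith⟩
  · exact Real.sin_pos_of_pos_of_lt_pi (by linarith) (by nlinarith [Real.pi_pos])
  · linear_combination 2 * Real.cos_sq (Real.arccos p / 2) + hcc
  · linear_combination 2 * Real.sin_sq_add_cos_sq (Real.arccos p / 2)
      - 2 * Real.cos_sq (Real.arccos p / 2) - hcc
  · linear_combination hss - Real.sin_two_mul (Real.arccos p / 2)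

lemma side_facts {θ : ℝ} (h0 : 0 < θ) (h1 : θ < π) :
    0 < Real.cos (θ / 2) ∧ 0 < Real.sin (θ / 2) ∧
    2 * Real.cos (θ / 2) ^ 2 = 1 + Real.cos θ ∧
    2 * Real.sin (θ / 2) ^ 2 = 1 - Real.cos θ ∧
    2 * (Real.sin (θ / 2) * Real.cos (θ / 2)) = Real.sin θ := by
  have hcc : Real.cos (2 * (θ / 2)) = Real.cos θ := by rw [show 2 * (θ / 2) = θ by ring]
  have hss : Real.sin (2 * (θ / 2)) = Real.sin θ := by rw [show 2 * (θ / 2) = θ by ring]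
  refine ⟨?_, ?_, ?_, ?_, ?_⟩
  · exact Real.cos_pos_of_mem_Ioo ⟨by nlinarith [Real.pi_pos], by nlinarith⟩
  · exact Real.sin_pos_of_pos_of_lt_pi (by linarith) (by nlinarith [Real.pi_pos])
  · linear_combination 2 * Real.cos_sq (θ / 2) + hcc
  · linear_combination 2 * Real.sin_sq_add_cos_sq (θ / 2) - 2 * Real.cos_sq (θ / 2) - hcc
  · linear_combination hss - Real.sin_two_mul (θ / 2)

lemma pBound_sqrt (ca cb cc sb sc V p : ℝ)
    (hsb : sb^2 = 1 - cb^2) (hsc : sc^2 = 1 - cc^2)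
    (hV : V^2 = 1 - ca^2 - cb^2 - cc^2 + 2*(ca*(cb*cc)))
    (hp : p*(sb*sc) = cc*cb - ca)
    (hsbsc : 0 < sb*sc) (hV0 : 0 ≤ V)
    (hd : 0 < 1 - ca^2 - cb^2 - cc^2 + 2*(ca*(cb*cc))) :
    (-1 < p ∧ p < 1) ∧ Real.sqrt (1 - p^2) * (sb*sc) = V := by
  have e1 : p^2*(sb*sc)^2
      = (sb*sc)^2 - (1 - ca^2 - cb^2 - cc^2 + 2*(ca*(cb*cc))) := by
    linear_combination (sb*sc*p + cb*cc + (-1)*ca) * hp + ((-1)*sc^2) * hsb + ((-1) + cb^2) * hsc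
  have hb : p^2 < 1 := by nlinarith [e1, hd, mul_pos hsbsc hsbsc]
  have h1p : 0 ≤ 1 - p^2 := by nlinarith [hb]
  have hm : -1 < p := by nlinarith [hb]
  have hM : p < 1 := by nlinarith [hb]
  have hsq : (Real.sqrt (1 - p^2) * (sb*sc))^2 = V^2 := by
    rw [mul_pow, Real.sq_sqrt h1p]
    linear_combination ((-1)*sb*sc*p + (-1)*cb*cc + ca) * hp + (sc^2) * hsb + (1 + (-1)*cb^2) * hsc + ((-1)) * hV
  have hl0 : 0 ≤ Real.sqrt (1 - p^2) * (sb*sc) := mul_nonneg (Real.sqrt_nonneg _) hsbsc.le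
  exact ⟨⟨hm, hM⟩, by rw [← Real.sqrt_sq hl0, hsq, Real.sqrt_sq hV0]⟩

set_option maxHeartbeats 1000000 in
lemma E_all (ca cb cc sa sb sc V p1 p2 p3 s1 s2 s3 u1 v1 u2 v2 u3 v3 C1 S1 C2 S2 C3 S3 : ℝ)
    (hsa0 : 0 < sa) (hsb0 : 0 < sb) (hsc0 : 0 < sc)
    (hu10 : 0 < u1) (hv10 : 0 < v1) (hu20 : 0 < u2) (hv20 : 0 < v2)
    (hu30 : 0 < u3) (hv30 : 0 < v3)
    (hC10 : 0 < C1) (hS10 : 0 < S1) (hC20 : 0 < C2) (hS20 : 0 < S2)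
    (hC30 : 0 < C3) (hS30 : 0 < S3)
    (hu1 : 2*u1^2 = 1 + p1) (hv1 : 2*v1^2 = 1 - p1) (huv1 : 2*(u1*v1) = s1)
    (hu2 : 2*u2^2 = 1 + p2) (hv2 : 2*v2^2 = 1 - p2) (huv2 : 2*(u2*v2) = s2)
    (hu3 : 2*u3^2 = 1 + p3) (hv3 : 2*v3^2 = 1 - p3) (huv3 : 2*(u3*v3) = s3)
    (hC1 : 2*C1^2 = 1 + cc) (hS1 : 2*S1^2 = 1 - cc) (hCS1 : 2*(S1*C1) = sc)
    (hC2 : 2*C2^2 = 1 + ca) (hS2 : 2*S2^2 = 1 - ca) (hCS2 : 2*(S2*C2) = sa)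
    (hC3 : 2*C3^2 = 1 + cb) (hS3 : 2*S3^2 = 1 - cb) (hCS3 : 2*(S3*C3) = sb)
    (hp1 : p1*(sb*sc) = cc*cb - ca) (hp2 : p2*(sa*sc) = cc*ca - cb)
    (hp3 : p3*(sa*sb) = ca*cb - cc)
    (hs1 : s1*(sb*sc) = V) (hs2 : s2*(sa*sc) = V) (hs3 : s3*(sa*sb) = V)
    (hsa : sa^2 = 1 - ca^2) (hsb : sb^2 = 1 - cb^2) (hsc : sc^2 = 1 - cc^2)
    (hV : V^2 = 1 - ca^2 - cb^2 - cc^2 + 2*(ca*(cb*cc))) :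
    u2*(C1*C2 - S1*S2) = -(C3*(u1*u3 - v1*v3)) ∧
    v2*(C1*C2 + S1*S2) = C3*(u1*v3 + v1*u3) ∧
    u2*(C1*S2 + S1*C2) = S3*(u1*u3 + v1*v3) ∧
    v2*(C1*S2 - S1*C2) = S3*(u1*v3 - v1*u3) := by
  have hMpos : (0:ℝ) < (sa*sb*sc)^2 := pow_pos (mul_pos (mul_pos hsa0 hsb0) hsc0) 2
  have hMne : ((sa*sb*sc)^2) ≠ 0 := ne_of_gt hMpos
  have key2 : (v2*(C1*C2 + S1*S2))^2 * (sa*sb*sc)^2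
      = (C3*(u1*v3 + v1*u3))^2 * (sa*sb*sc)^2 := by
    linear_combination ((-1/2)*sa^2*sb^2*sc^2*v3^2*C3^2) * hu1 + ((-1/2)*sa^2*sb^2*sc^2*u3^2*C3^2) * hv1 + ((-1)*sa^2*sb^2*sc^2*u3*v3*C3^2) * huv1 + ((1/2)*sa^2*sb^2*sc^2*S1^2*S2^2 + sa^2*sb^2*sc^2*C1*S1*C2*S2 + (1/2)*sa^2*sb^2*sc^2*C1^2*C2^2) * hv2 + ((-1/4)*sa^2*sb^2*sc^2*C3^2 + (1/4)*sa^2*sb^2*sc^2*p1*C3^2) * hu3 + ((-1/4)*sa^2*sb^2*sc^2*C3^2 + (-1/4)*sa^2*sb^2*sc^2*p1*C3^2) * hv3 + ((-1/2)*sa^2*sb^2*sc^2*s1*C3^2) * huv3 + ((1/4)*sa^2*sb^2*sc^2*C2^2 + (-1/4)*sa^2*sb^2*sc^2*p2*C2^2) * hC1 + ((1/4)*sa^2*sb^2*sc^2*S2^2 + (-1/4)*sa^2*sb^2*sc^2*p2*S2^2) * hS1 + ((1/2)*sa^2*sb^2*sc^2*C2*S2 + (-1/2)*sa^2*sb^2*sc^2*p2*C2*S2)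 * hCS1 + ((1/8)*sa^2*sb^2*sc^2 + (-1/8)*sa^2*sb^2*sc^2*p2 + (1/8)*cc*sa^2*sb^2*sc^2 + (-1/8)*cc*sa^2*sb^2*sc^2*p2) * hC2 + ((1/8)*sa^2*sb^2*sc^2 + (-1/8)*sa^2*sb^2*sc^2*p2 + (-1/8)*cc*sa^2*sb^2*sc^2 + (1/8)*cc*sa^2*sb^2*sc^2*p2) * hS2 + ((1/4)*sa^2*sb^2*sc^3 + (-1/4)*sa^2*sb^2*sc^3*p2) * hCS2 + ((-1/4)*sa^2*sb^2*sc^2 + (-1/4)*sa^2*sb^2*sc^2*s1*s3 + (1/4)*sa^2*sb^2*sc^2*p1*p3) * hC3 + ((1/4)*sa^2*sb*sc*p3 + (1/4)*cb*sa^2*sb*sc*p3) * hp1 + ((-1/4)*sa*sb^2*sc + (-1/4)*sa^2*sb^2*sc^2 + (-1/4)*ca*cc*sa*sb^2*sc) * hp2 + ((1/4)*cb*cc*sa*sc + (1/4)*cb^2*cc*sa*sc + (-1/4)*ca*sa*sc + (-1/4)*ca*cb*sa*sc) * hp3 + ((-1/4)*sa^2*sb*sc*s3 + (-1/4)*cb*sa^2*sb*sc*s3)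 * hs1 + ((-1/4)*sa*sc*V + (-1/4)*cb*sa*sc*V) * hs3 + ((1/4)*sa*sb^2*sc^3) * hsa + ((1/4)*sa*sc^3 + (1/4)*cb*sa*sc + (-1/4)*ca*cc*sa*sc + (1/4)*ca*cb*cc*sa*sc + (-1/4)*ca^2*sa*sc^3 + (-1/4)*ca^2*cc^2*sa*sc) * hsb + ((1/4)*sa*sc + (-1/4)*cb^2*sa*sc + (-1/4)*ca^2*sa*sc + (1/4)*ca^2*cb^2*sa*sc) * hsc + ((-1/4)*sa*sc + (-1/4)*cb*sa*sc) * hV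
  have sq2 : (v2*(C1*C2 + S1*S2))^2 = (C3*(u1*v3 + v1*u3))^2 := mul_right_cancel₀ hMne key2
  have l2 : 0 ≤ v2*(C1*C2 + S1*S2) :=
    le_of_lt (mul_pos hv20 (add_pos (mul_pos hC10 hC20) (mul_pos hS10 hS20)))
  have r2 : 0 ≤ C3*(u1*v3 + v1*u3) :=
    le_of_lt (mul_pos hC30 (add_pos (mul_pos hu10 hv30) (mul_pos hv10 hu30)))
  have E2 : v2*(C1*C2 + S1*S2) = C3*(u1*v3 + v1*u3) := by
    rw [← Real.sqrt_sq l2, sq2, Real.sqrt_sq r2]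
  have key3 : (u2*(C1*S2 + S1*C2))^2 * (sa*sb*sc)^2
      = (S3*(u1*u3 + v1*v3))^2 * (sa*sb*sc)^2 := by
    linear_combination ((-1/2)*sa^2*sb^2*sc^2*u3^2*S3^2) * hu1 + ((-1/2)*sa^2*sb^2*sc^2*v3^2*S3^2) * hv1 + ((-1)*sa^2*sb^2*sc^2*u3*v3*S3^2) * huv1 + ((1/2)*sa^2*sb^2*sc^2*S1^2*C2^2 + sa^2*sb^2*sc^2*C1*S1*C2*S2 + (1/2)*sa^2*sb^2*sc^2*C1^2*S2^2) * hu2 + ((-1/4)*sa^2*sb^2*sc^2*S3^2 + (-1/4)*sa^2*sb^2*sc^2*p1*S3^2) * hu3 + ((-1/4)*sa^2*sb^2*sc^2*S3^2 + (1/4)*sa^2*sb^2*sc^2*p1*S3^2) * hv3 + ((-1/2)*sa^2*sb^2*sc^2*s1*S3^2) * huv3 + ((1/4)*sa^2*sb^2*sc^2*S2^2 + (1/4)*sa^2*sb^2*sc^2*p2*S2^2) * hC1 + ((1/4)*sa^2*sb^2*sc^2*C2^2 + (1/4)*sa^2*sb^2*sc^2*p2*C2^2) * hS1 + ((1/2)*sa^2*sb^2*sc^2*C2*S2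 + (1/2)*sa^2*sb^2*sc^2*p2*C2*S2) * hCS1 + ((1/8)*sa^2*sb^2*sc^2 + (1/8)*sa^2*sb^2*sc^2*p2 + (-1/8)*cc*sa^2*sb^2*sc^2 + (-1/8)*cc*sa^2*sb^2*sc^2*p2) * hC2 + ((1/8)*sa^2*sb^2*sc^2 + (1/8)*sa^2*sb^2*sc^2*p2 + (1/8)*cc*sa^2*sb^2*sc^2 + (1/8)*cc*sa^2*sb^2*sc^2*p2) * hS2 + ((1/4)*sa^2*sb^2*sc^3 + (1/4)*sa^2*sb^2*sc^3*p2) * hCS2 + ((-1/4)*sa^2*sb^2*sc^2 + (-1/4)*sa^2*sb^2*sc^2*s1*s3 + (-1/4)*sa^2*sb^2*sc^2*p1*p3) * hS3 + ((-1/4)*sa^2*sb*sc*p3 + (1/4)*cb*sa^2*sb*sc*p3) * hp1 + ((1/4)*sa*sb^2*sc + (1/4)*sa^2*sb^2*sc^2 + (-1/4)*ca*cc*sa*sb^2*sc) * hp2 + ((-1/4)*cb*cc*sa*sc + (1/4)*cb^2*cc*sa*sc + (1/4)*ca*sa*sc + (-1/4)*ca*cb*sa*sc) * hp3 + ((-1/4)*sa^2*sb*sc*s3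 + (1/4)*cb*sa^2*sb*sc*s3) * hs1 + ((-1/4)*sa*sc*V + (1/4)*cb*sa*sc*V) * hs3 + ((1/4)*sa*sb^2*sc^3) * hsa + ((1/4)*sa*sc^3 + (-1/4)*cb*sa*sc + (1/4)*ca*cc*sa*sc + (1/4)*ca*cb*cc*sa*sc + (-1/4)*ca^2*sa*sc^3 + (-1/4)*ca^2*cc^2*sa*sc) * hsb + ((1/4)*sa*sc + (-1/4)*cb^2*sa*sc + (-1/4)*ca^2*sa*sc + (1/4)*ca^2*cb^2*sa*sc) * hsc + ((-1/4)*sa*sc + (1/4)*cb*sa*sc) * hV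
  have sq3 : (u2*(C1*S2 + S1*C2))^2 = (S3*(u1*u3 + v1*v3))^2 := mul_right_cancel₀ hMne key3
  have l3 : 0 ≤ u2*(C1*S2 + S1*C2) :=
    le_of_lt (mul_pos hu20 (add_pos (mul_pos hC10 hS20) (mul_pos hS10 hC20)))
  have r3 : 0 ≤ S3*(u1*u3 + v1*v3) :=
    le_of_lt (mul_pos hS30 (add_pos (mul_pos hu10 hu30) (mul_pos hv10 hv30)))
  have E3 : u2*(C1*S2 + S1*C2) = S3*(u1*u3 + v1*v3) := by
    rw [← Real.sqrt_sq l3, sq3, Real.sqrt_sq r3]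
  have hk2 : v2*(C1*C2 + S1*S2) * (sa*sb*sc)^2 ≠ 0 :=
    ne_of_gt (mul_pos (mul_pos hv20 (add_pos (mul_pos hC10 hC20) (mul_pos hS10 hS20))) hMpos)
  have E1 : u2*(C1*C2 - S1*S2) = -(C3*(u1*u3 - v1*v3)) := by
    apply mul_right_cancel₀ hk2
    conv_rhs => rw [E2]
    linear_combination ((1/2)*sa^2*sb^2*sc^2*u3*v3*C3^2) * hu1 + ((-1/2)*sa^2*sb^2*sc^2*u3*v3*C3^2) * hv1 + ((-1/2)*sa^2*sb^2*sc^2*v3^2*C3^2 + (1/2)*sa^2*sb^2*sc^2*u3^2*C3^2) * huv1 + ((-1/2)*sa^2*sb^2*sc^2*S1^2*S2^2 + (1/2)*sa^2*sb^2*sc^2*C1^2*C2^2) * huv2 + ((1/4)*sa^2*sb^2*sc^2*s1*C3^2) * hu3 + ((-1/4)*sa^2*sb^2*sc^2*s1*C3^2) * hv3 + ((1/2)*sa^2*sb^2*sc^2*p1*C3^2) * huv3 + ((1/4)*sa^2*sb^2*sc^2*s2*C2^2) * hC1 + ((-1/4)*sa^2*sb^2*sc^2*s2*S2^2) * hS1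 + ((1/8)*sa^2*sb^2*sc^2*s2 + (1/8)*cc*sa^2*sb^2*sc^2*s2) * hC2 + ((-1/8)*sa^2*sb^2*sc^2*s2 + (1/8)*cc*sa^2*sb^2*sc^2*s2) * hS2 + ((1/4)*sa^2*sb^2*sc^2*p3*s1 + (1/4)*sa^2*sb^2*sc^2*p1*s3) * hC3 + ((1/4)*sa^2*sb*sc*s3 + (1/4)*cb*sa^2*sb*sc*s3) * hp1 + ((1/4)*sa*sb*sc^2*s1 + (1/4)*cb*sa*sb*sc^2*s1) * hp3 + ((-1/4)*cc*sa*sc + (-1/4)*cb*cc*sa*sc + (1/4)*ca*cb*sa*sc + (1/4)*ca*cb^2*sa*sc) * hs1 + ((1/4)*cc*sa*sb^2*sc + (1/4)*ca*sa*sb^2*sc) * hs2 + ((1/4)*cb*cc*sa*sc + (1/4)*cb^2*cc*sa*sc + (-1/4)*ca*sa*sc + (-1/4)*ca*cb*sa*sc) * hs3 + ((1/4)*cc*sa*sc*V + (1/4)*ca*sa*sc*V) * hsb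
  have hk3 : u2*(C1*S2 + S1*C2) * (sa*sb*sc)^2 ≠ 0 :=
    ne_of_gt (mul_pos (mul_pos hu20 (add_pos (mul_pos hC10 hS20) (mul_pos hS10 hC20))) hMpos)
  have E4 : v2*(C1*S2 - S1*C2) = S3*(u1*v3 - v1*u3) := by
    apply mul_right_cancel₀ hk3
    conv_rhs => rw [E3]
    linear_combination ((-1/2)*sa^2*sb^2*sc^2*u3*v3*S3^2) * hu1 + ((1/2)*sa^2*sb^2*sc^2*u3*v3*S3^2) * hv1 + ((-1/2)*sa^2*sb^2*sc^2*v3^2*S3^2 + (1/2)*sa^2*sb^2*sc^2*u3^2*S3^2) * huv1 + ((-1/2)*sa^2*sb^2*sc^2*S1^2*C2^2 + (1/2)*sa^2*sb^2*sc^2*C1^2*S2^2) * huv2 + ((1/4)*sa^2*sb^2*sc^2*s1*S3^2) * hu3 + ((-1/4)*sa^2*sb^2*sc^2*s1*S3^2) * hv3 + ((-1/2)*sa^2*sb^2*sc^2*p1*S3^2) * huv3 + ((1/4)*sa^2*sb^2*sc^2*s2*S2^2) * hC1 + ((-1/4)*sa^2*sb^2*sc^2*s2*C2^2) * hS1 +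 ((-1/8)*sa^2*sb^2*sc^2*s2 + (1/8)*cc*sa^2*sb^2*sc^2*s2) * hC2 + ((1/8)*sa^2*sb^2*sc^2*s2 + (1/8)*cc*sa^2*sb^2*sc^2*s2) * hS2 + ((1/4)*sa^2*sb^2*sc^2*p3*s1 + (-1/4)*sa^2*sb^2*sc^2*p1*s3) * hS3 + ((-1/4)*sa^2*sb*sc*s3 + (1/4)*cb*sa^2*sb*sc*s3) * hp1 + ((1/4)*sa*sb*sc^2*s1 + (-1/4)*cb*sa*sb*sc^2*s1) * hp3 + ((-1/4)*cc*sa*sc + (1/4)*cb*cc*sa*sc + (1/4)*ca*cb*sa*sc + (-1/4)*ca*cb^2*sa*sc) * hs1 + ((1/4)*cc*sa*sb^2*sc + (-1/4)*ca*sa*sb^2*sc) * hs2 + ((-1/4)*cb*cc*sa*sc + (1/4)*cb^2*cc*sa*sc + (1/4)*ca*sa*sc + (-1/4)*ca*cb*sa*sc) * hs3 + ((1/4)*cc*sa*sc*V + (-1/4)*ca*sa*sc*V) * hsb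
  exact ⟨E1, E2, E3, E4⟩

set_option maxHeartbeats 1000000 in
/-- For a spherical triangle with side lengths `t₁₂, t₂₃, t₃₁ ∈ (0,π)`
(positive definiteness of the cosine Gram matrix) and exterior angles `φ₁, φ₂, φ₃`,
one has `h_{φ₁} a_{t₁₂} h_{φ₂} a_{t₂₃} h_{φ₃} a_{t₃₁} = −I₂` and
`h_{2π−φ₁} a_{t₁₂} h_{2π−φ₂} a_{t₂₃} h_{2π−φ₃} a_{t₃₁} = I₂`. -/
theorem stmt_10 (t12 t23 t31 : ℝ)
    (h12 : t12 ∈ Set.Ioo 0 π) (h23 : t23 ∈ Set.Ioo 0 π) (h31 : t31 ∈ Set.Ioo 0 π)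
    (hpos : (!![1, Real.cos t12, Real.cos t31;
                Real.cos t12, 1, Real.cos t23;
                Real.cos t31, Real.cos t23, 1] : Matrix (Fin 3) (Fin 3) ℝ).PosDef) :
    hMat (extAngle t12 t31 t23) * aMat t12 * hMat (extAngle t12 t23 t31) * aMat t23
        * hMat (extAngle t23 t31 t12) * aMat t31 = -1 ∧
    hMat (2 * π - extAngle t12 t31 t23) * aMat t12 * hMat (2 * π - extAngle t12 t23 t31)
        * aMat t23 * hMat (2 * π - extAngle t23 t31 t12) * aMat t31 = 1 := by
  obtain ⟨hc0, hc1⟩ := h12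
  obtain ⟨ha0, ha1⟩ := h23
  obtain ⟨hb0, hb1⟩ := h31
  set ca := Real.cos t23 with hca
  set cb := Real.cos t31 with hcb
  set cc := Real.cos t12 with hcc
  set sa := Real.sin t23 with hsa'
  set sb := Real.sin t31 with hsb'
  set sc := Real.sin t12 with hsc'
  have hsa0 : 0 < sa := by rw [hsa']; exact Real.sin_pos_of_pos_of_lt_pi ha0 ha1
  have hsb0 : 0 < sb := by rw [hsb']; exact Real.sin_pos_of_pos_of_lt_pi hb0 hb1
  have hsc0 : 0 < sc := by rw [hsc']; exact Real.sin_pos_of_pos_of_lt_pi hc0 hc1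
  have hsa2 : sa^2 = 1 - ca^2 := by rw [hsa', hca, Real.sin_sq]
  have hsb2 : sb^2 = 1 - cb^2 := by rw [hsb', hcb, Real.sin_sq]
  have hsc2 : sc^2 = 1 - cc^2 := by rw [hsc', hcc, Real.sin_sq]
  have hd : 0 < 1 - ca^2 - cb^2 - cc^2 + 2*(ca*(cb*cc)) := by
    have h0 := hpos.det_pos
    simp [Matrix.det_fin_three] at h0
    nlinarith [h0]
  set V := Real.sqrt (1 - ca^2 - cb^2 - cc^2 + 2*(ca*(cb*cc))) with hVdef
  have hV : V^2 = 1 - ca^2 - cb^2 - cc^2 + 2*(ca*(cb*cc)) := Real.sq_sqrt hd.le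
  have hV0 : 0 ≤ V := Real.sqrt_nonneg _
  set p1 := (cc*cb - ca)/(sc*sb) with hp1def
  set p2 := (cc*ca - cb)/(sc*sa) with hp2def
  set p3 := (ca*cb - cc)/(sa*sb) with hp3def
  have hf1 : extAngle t12 t31 t23 = Real.arccos p1 := by
    rw [hp1def, hca, hcb, hcc, hsb', hsc']; rfl
  have hf2 : extAngle t12 t23 t31 = Real.arccos p2 := by
    rw [hp2def, hca, hcb, hcc, hsa', hsc']; rfl
  have hf3 : extAngle t23 t31 t12 = Real.arccos p3 := by
    rw [hp3def, hca, hcb, hcc, hsa', hsb']; rfl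
  have hp1 : p1*(sb*sc) = cc*cb - ca := by
    rw [hp1def, mul_comm sb sc]
    exact div_mul_cancel₀ _ (ne_of_gt (mul_pos hsc0 hsb0))
  have hp2 : p2*(sa*sc) = cc*ca - cb := by
    rw [hp2def, mul_comm sa sc]
    exact div_mul_cancel₀ _ (ne_of_gt (mul_pos hsc0 hsa0))
  have hp3 : p3*(sa*sb) = ca*cb - cc := by
    rw [hp3def]
    exact div_mul_cancel₀ _ (ne_of_gt (mul_pos hsa0 hsb0))
  obtain ⟨⟨hm1, hM1⟩, hsq1⟩ := pBound_sqrt ca cb cc sb sc V p1 hsb2 hsc2 hV hp1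
    (mul_pos hsb0 hsc0) hV0 hd
  obtain ⟨⟨hm2, hM2⟩, hsq2⟩ := pBound_sqrt cb ca cc sa sc V p2 hsa2 hsc2
    (by linear_combination hV) (by linear_combination hp2) (mul_pos hsa0 hsc0) hV0
    (by nlinarith [hd])
  obtain ⟨⟨hm3, hM3⟩, hsq3⟩ := pBound_sqrt cc ca cb sa sb V p3 hsa2 hsb2
    (by linear_combination hV) (by linear_combination hp3) (mul_pos hsa0 hsb0) hV0
    (by nlinarith [hd])
  obtain ⟨hu10, hv10, hu1, hv1, huv1'⟩ := half_facts hm1 hM1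
  obtain ⟨hu20, hv20, hu2, hv2, huv2'⟩ := half_facts hm2 hM2
  obtain ⟨hu30, hv30, hu3, hv3, huv3'⟩ := half_facts hm3 hM3
  obtain ⟨hC10, hS10, hC1, hS1, hCS1⟩ := side_facts hc0 hc1
  obtain ⟨hC20, hS20, hC2, hS2, hCS2⟩ := side_facts ha0 ha1
  obtain ⟨hC30, hS30, hC3, hS3, hCS3⟩ := side_facts hb0 hb1
  have hs1 : Real.sin (extAngle t12 t31 t23) * (sb*sc) = V := by
    rw [hf1, Real.sin_arccos]; exact hsq1
  have hs2 : Real.sin (extAngle t12 t23 t31) * (sa*sc) = V := by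
    rw [hf2, Real.sin_arccos]; exact hsq2
  have hs3 : Real.sin (extAngle t23 t31 t12) * (sa*sb) = V := by
    rw [hf3, Real.sin_arccos]; exact hsq3
  have huv1 : 2 * (Real.cos (extAngle t12 t31 t23 / 2) * Real.sin (extAngle t12 t31 t23 / 2))
      = Real.sin (extAngle t12 t31 t23) := by
    rw [hf1, Real.sin_arccos]; exact huv1'
  have huv2 : 2 * (Real.cos (extAngle t12 t23 t31 / 2) * Real.sin (extAngle t12 t23 t31 / 2))
      = Real.sin (extAngle t12 t23 t31) := by
    rw [hf2, Real.sin_arccos]; exact huv2'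
  have huv3 : 2 * (Real.cos (extAngle t23 t31 t12 / 2) * Real.sin (extAngle t23 t31 t12 / 2))
      = Real.sin (extAngle t23 t31 t12) := by
    rw [hf3, Real.sin_arccos]; exact huv3'
  obtain ⟨E1, E2, E3, E4⟩ := E_all ca cb cc sa sb sc V p1 p2 p3
    (Real.sin (extAngle t12 t31 t23)) (Real.sin (extAngle t12 t23 t31))
    (Real.sin (extAngle t23 t31 t12))
    (Real.cos (extAngle t12 t31 t23 / 2)) (Real.sin (extAngle t12 t31 t23 / 2))
    (Real.cos (extAngle t12 t23 t31 / 2)) (Real.sin (extAngle t12 t23 t31 / 2))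
    (Real.cos (extAngle t23 t31 t12 / 2)) (Real.sin (extAngle t23 t31 t12 / 2))
    (Real.cos (t12 / 2)) (Real.sin (t12 / 2)) (Real.cos (t23 / 2)) (Real.sin (t23 / 2))
    (Real.cos (t31 / 2)) (Real.sin (t31 / 2))
    hsa0 hsb0 hsc0
    (by rw [hf1]; exact hu10) (by rw [hf1]; exact hv10)
    (by rw [hf2]; exact hu20) (by rw [hf2]; exact hv20)
    (by rw [hf3]; exact hu30) (by rw [hf3]; exact hv30)
    hC10 hS10 hC20 hS20 hC30 hS30
    (by rw [hf1]; exact hu1) (by rw [hf1]; exact hv1) huv1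
    (by rw [hf2]; exact hu2) (by rw [hf2]; exact hv2) huv2
    (by rw [hf3]; exact hu3) (by rw [hf3]; exact hv3) huv3
    (by rw [hcc]; exact hC1) (by rw [hcc]; exact hS1) (by rw [hsc']; exact hCS1)
    (by rw [hca]; exact hC2) (by rw [hca]; exact hS2) (by rw [hsa']; exact hCS2)
    (by rw [hcb]; exact hC3) (by rw [hcb]; exact hS3) (by rw [hsb']; exact hCS3)
    hp1 hp2 hp3 hs1 hs2 hs3 hsa2 hsb2 hsc2 hV
  exact ⟨aux_prod _ _ _ _ _ _ E1 E2 E3 E4, aux_prod2 _ _ _ _ _ _ E1 E2 E3 E4⟩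
end

section
/- Let t₁₂, t₂₃, t₃₁ ∈ (0,π) be such that the 3×3 matrix with unit diagonal and off-diagonal entries cos t_{ij} is positive definite, and let φ_k ∈ (0,π) (k = 1,2,3) be the exterior angles defined by cos φ_k = (cos t_{ki} cos t_{kj} − cos t_{ij})/(sin t_{ki} sin t_{kj}) for {i,j,k} = {1,2,3}. Suppose ξ₁, ξ₂, ξ₃ ∈ [0,2π] satisfy h_{ξ₁} a_{t₁₂} h_{ξ₂} a_{t₂₃} h_{ξ₃} a_{t₃₁} = ε·I₂ with ε ∈ {−1,+1}. Then: if ε = −1, necessarily ξ_k = φ_k for all k; and if ε = +1, necessarily ξ_k = 2π − φ_k for all k. -/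
open Real

lemma expI (x : ℝ) : Complex.exp ((x:ℂ) * Complex.I)
    = (Real.cos x : ℂ) + (Real.sin x : ℂ) * Complex.I := by
  rw [Complex.exp_mul_I]; norm_cast

lemma hMat_cs (ξ : ℝ) : hMat ξ =
    !![(Real.cos (ξ/2) : ℂ) + (Real.sin (ξ/2) : ℂ) * Complex.I, 0;
       0, (Real.cos (ξ/2) : ℂ) - (Real.sin (ξ/2) : ℂ) * Complex.I] := by
  have h1 : (ξ : ℂ) * Complex.I / 2 = ((ξ/2 : ℝ) : ℂ) * Complex.I := by push_cast; ring
  have h2 : -((ξ : ℂ) * Complex.I) / 2 = ((-(ξ/2) : ℝ) : ℂ) * Complex.I := by push_cast; ring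
  unfold hMat
  rw [h1, h2, expI, expI, Real.cos_neg, Real.sin_neg]
  ext i j
  fin_cases i <;> fin_cases j <;>
    simp [-Complex.ofReal_cos, -Complex.ofReal_sin] <;>
    push_cast <;> ring_nf

lemma cyc {a b : Matrix (Fin 2) (Fin 2) ℂ} {ε : ℝ} (hε : ε^2 = 1)
    (h : a * b = (ε:ℂ) • 1) : b * a = (ε:ℂ) • 1 := by
  have hεc : (ε:ℂ) * (ε:ℂ) = 1 := by
    have h' : ((ε^2 : ℝ) : ℂ) = 1 := by rw [hε]; norm_num
    push_cast at h'; linear_combination h'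
  have h1 : a * ((ε:ℂ) • b) = 1 := by
    rw [Matrix.mul_smul, h, smul_smul, hεc, one_smul]
  have h2 := mul_eq_one_comm.mp h1
  rw [Matrix.smul_mul] at h2
  calc b * a = ((ε:ℂ) * ε) • (b * a) := by rw [hεc, one_smul]
    _ = (ε:ℂ) • ((ε:ℂ) • (b * a)) := by rw [smul_smul]
    _ = (ε:ℂ) • (1 : Matrix (Fin 2) (Fin 2) ℂ) := by rw [h2]

lemma sinrange_pos {x : ℝ} (hx : x ∈ Set.Icc 0 (2*π)) (h : 0 < Real.sin x) :
    0 < x ∧ x < π := by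
  obtain ⟨hx0, hx2⟩ := hx
  constructor
  · rcases lt_or_eq_of_le hx0 with h'|h'
    · exact h'
    · exfalso; rw [← h', Real.sin_zero] at h; exact lt_irrefl _ h
  · by_contra hc
    push_neg at hc
    have h1 : 0 ≤ Real.sin (x - π) :=
      Real.sin_nonneg_of_nonneg_of_le_pi (by linarith) (by linarith)
    rw [Real.sin_sub_pi] at h1
    linarith

lemma sinrange_neg {x : ℝ} (hx : x ∈ Set.Icc 0 (2*π)) (h : Real.sin x < 0) :
    π < x ∧ x < 2*π := by
  obtain ⟨hx0, hx2⟩ := hx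
  constructor
  · by_contra hc
    push_neg at hc
    have h1 : 0 ≤ Real.sin x := Real.sin_nonneg_of_nonneg_of_le_pi hx0 hc
    linarith
  · rcases lt_or_eq_of_le hx2 with h'|h'
    · exact h'
    · exfalso; rw [h', Real.sin_two_pi] at h; exact lt_irrefl _ h

lemma sin_ne_zero_of {x : ℝ} (hx : x ∈ Set.Icc 0 (2*π)) (hb1 : -1 < Real.cos x)
    (hb2 : Real.cos x < 1) : Real.sin x ≠ 0 := by
  intro h
  rcases Real.sin_eq_zero_iff.mp h with ⟨n, hn⟩
  have hπ := Real.pi_pos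
  obtain ⟨hx0, hx2⟩ := hx
  have hn0 : (0:ℤ) ≤ n := by
    by_contra hc
    push_neg at hc
    have : (n:ℝ) < 0 := by exact_mod_cast hc
    nlinarith
  have hn2 : n ≤ 2 := by
    by_contra hc
    push_neg at hc
    have : (2:ℝ) < (n:ℝ) := by exact_mod_cast hc
    nlinarith
  interval_cases n
  · simp at hn; rw [← hn, Real.cos_zero] at hb2; linarith
  · simp at hn; rw [← hn, Real.cos_pi] at hb1; linarith
  · have hn' : x = 2*π := by push_cast at hn; linarith
    rw [hn', Real.cos_two_pi] at hb2; linarith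

lemma pos_factor {a b : ℝ} (ha : 0 < a) (h : 0 < a*b) : 0 < b := by nlinarith

lemma neg_factor {a b : ℝ} (ha : 0 < a) (h : a*b < 0) : b < 0 := by nlinarith

set_option maxHeartbeats 2000000 in
lemma realcore (a1 b1 a2 b2 a3 b3 cc1 ss1 cc2 ss2 cc3 ss3 ε : ℝ)
    (pB1 : b1^2 + a1^2 = 1) (pB2 : b2^2 + a2^2 = 1) (pB3 : b3^2 + a3^2 = 1)
    (ps1 : ss1^2 + cc1^2 = 1) (ps2 : ss2^2 + cc2^2 = 1) (ps3 : ss3^2 + cc3^2 = 1)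
    (pe : ε^2 = 1)
    (r00 : (-1)*b1*b2*a3*ss1*ss2*cc3 + (-1)*b1*b2*a3*ss1*cc2*ss3 + b1*b2*a3*cc1*ss2*ss3 + (-1)*b1*b2*a3*cc1*cc2*cc3 + b1*a2*b3*ss1*ss2*cc3 + (-1)*b1*a2*b3*ss1*cc2*ss3 + (-1)*b1*a2*b3*cc1*ss2*ss3 + (-1)*b1*a2*b3*cc1*cc2*cc3 + (-1)*a1*b2*b3*ss1*ss2*cc3 + a1*b2*b3*ss1*cc2*ss3 + (-1)*a1*b2*b3*cc1*ss2*ss3 + (-1)*a1*b2*b3*cc1*cc2*cc3 + (-1)*a1*a2*a3*ss1*ss2*cc3 + (-1)*a1*a2*a3*ss1*cc2*ss3 + (-1)*a1*a2*a3*cc1*ss2*ss3 + a1*a2*a3*cc1*cc2*cc3 = ε)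
    (i00 : (-1)*b1*b2*b3*ss1*ss2*cc3 + b1*b2*b3*ss1*cc2*ss3 + (-1)*b1*b2*b3*cc1*ss2*ss3 + (-1)*b1*b2*b3*cc1*cc2*cc3 + (-1)*b1*a2*a3*ss1*ss2*cc3 + (-1)*b1*a2*a3*ss1*cc2*ss3 + (-1)*b1*a2*a3*cc1*ss2*ss3 + b1*a2*a3*cc1*cc2*cc3 + a1*b2*a3*ss1*ss2*cc3 + a1*b2*a3*ss1*cc2*ss3 + (-1)*a1*b2*a3*cc1*ss2*ss3 + a1*b2*a3*cc1*cc2*cc3 + (-1)*a1*a2*b3*ss1*ss2*cc3 + a1*a2*b3*ss1*cc2*ss3 + a1*a2*b3*cc1*ss2*ss3 + a1*a2*b3*cc1*cc2*cc3 = 0)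
    (r01 : (-1)*b1*b2*a3*ss1*ss2*ss3 + b1*b2*a3*ss1*cc2*cc3 + (-1)*b1*b2*a3*cc1*ss2*cc3 + (-1)*b1*b2*a3*cc1*cc2*ss3 + b1*a2*b3*ss1*ss2*ss3 + b1*a2*b3*ss1*cc2*cc3 + b1*a2*b3*cc1*ss2*cc3 + (-1)*b1*a2*b3*cc1*cc2*ss3 + (-1)*a1*b2*b3*ss1*ss2*ss3 + (-1)*a1*b2*b3*ss1*cc2*cc3 + a1*b2*b3*cc1*ss2*cc3 + (-1)*a1*b2*b3*cc1*cc2*ss3 + (-1)*a1*a2*a3*ss1*ss2*ss3 + a1*a2*a3*ss1*cc2*cc3 + a1*a2*a3*cc1*ss2*cc3 + a1*a2*a3*cc1*cc2*ss3 = 0)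
    (i01 : (-1)*b1*b2*b3*ss1*ss2*ss3 + (-1)*b1*b2*b3*ss1*cc2*cc3 + b1*b2*b3*cc1*ss2*cc3 + (-1)*b1*b2*b3*cc1*cc2*ss3 + (-1)*b1*a2*a3*ss1*ss2*ss3 + b1*a2*a3*ss1*cc2*cc3 + b1*a2*a3*cc1*ss2*cc3 + b1*a2*a3*cc1*cc2*ss3 + a1*b2*a3*ss1*ss2*ss3 + (-1)*a1*b2*a3*ss1*cc2*cc3 + a1*b2*a3*cc1*ss2*cc3 + a1*b2*a3*cc1*cc2*ss3 + (-1)*a1*a2*b3*ss1*ss2*ss3 + (-1)*a1*a2*b3*ss1*cc2*cc3 + (-1)*a1*a2*b3*cc1*ss2*cc3 + a1*a2*b3*cc1*cc2*ss3 = 0) :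
    (cc1^2*ss2^2 + ss1^2*cc2^2 + 2*(a2^2 - b2^2)*cc1*cc2*ss1*ss2 = ss3^2) ∧
    ((2*ss1*cc1)*(2*a2*b2) = (2*ss3*cc3)*(2*a3*b3)) ∧
    (cc3^2*b3 = -(ε*cc3)*((-1)*b1*a2*ss1*ss2 + b1*a2*cc1*cc2 + a1*b2*ss1*ss2 + a1*b2*cc1*cc2)) ∧
    (ss3^2*b3 = -(ε*ss3)*(b1*a2*ss1*cc2 + b1*a2*cc1*ss2 + (-1)*a1*b2*ss1*cc2 + a1*b2*cc1*ss2)) := by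
  refine ⟨?_, ?_, ?_, ?_⟩
  · linear_combination (ss3^2*ε + (-1)*b1*b2*a3*ss1*cc2*ss3 + b1*b2*a3*cc1*ss2*ss3 + (-1)*b1*a2*b3*ss1*cc2*ss3 + (-1)*b1*a2*b3*cc1*ss2*ss3 + a1*b2*b3*ss1*cc2*ss3 + (-1)*a1*b2*b3*cc1*ss2*ss3 + (-1)*a1*a2*a3*ss1*cc2*ss3 + (-1)*a1*a2*a3*cc1*ss2*ss3) * r00 + ((-1)*cc3*ss3*ε + b1*b2*a3*ss1*cc2*cc3 + (-1)*b1*b2*a3*cc1*ss2*cc3 + b1*a2*b3*ss1*cc2*cc3 + b1*a2*b3*cc1*ss2*cc3 + (-1)*a1*b2*b3*ss1*cc2*cc3 + a1*b2*b3*cc1*ss2*cc3 + a1*a2*a3*ss1*cc2*cc3 + a1*a2*a3*cc1*ss2*cc3) * r01 + (b1*b2*b3*ss1*cc2*ss3 + (-1)*b1*b2*b3*cc1*ss2*ss3 + (-1)*b1*a2*a3*ss1*cc2*ss3 + (-1)*b1*a2*a3*cc1*ss2*ss3 + a1*b2*a3*ss1*cc2*ss3 + (-1)*a1*b2*a3*cc1*ss2*ss3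 + a1*a2*b3*ss1*cc2*ss3 + a1*a2*b3*cc1*ss2*ss3) * i00 + ((-1)*b1*b2*b3*ss1*cc2*cc3 + b1*b2*b3*cc1*ss2*cc3 + b1*a2*a3*ss1*cc2*cc3 + b1*a2*a3*cc1*ss2*cc3 + (-1)*a1*b2*a3*ss1*cc2*cc3 + a1*b2*a3*cc1*ss2*cc3 + (-1)*a1*a2*b3*ss1*cc2*cc3 + (-1)*a1*a2*b3*cc1*ss2*cc3) * i01 + (cc1^2 + (-1)*cc1^2*ss3^2 + (-1)*cc1^2*cc3^2) * ps2 + (cc2^2 + (-1)*cc2^2*ss3^2 + (-1)*cc2^2*cc3^2) * ps1 + ((-2)*cc1*ss1*cc2*ss2 + (-1)*b3^2*ss1^2*cc2^2*ss3^2 + (-1)*b3^2*ss1^2*cc2^2*cc3^2 + 2*b3^2*cc1*ss1*cc2*ss2*ss3^2 + 2*b3^2*cc1*ss1*cc2*ss2*cc3^2 + (-1)*b3^2*cc1^2*ss2^2*ss3^2 + (-1)*b3^2*cc1^2*ss2^2*cc3^2 + (-1)*a3^2*ss1^2*cc2^2*ss3^2 + (-1)*a3^2*ss1^2*cc2^2*cc3^2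 + 2*a3^2*cc1*ss1*cc2*ss2*ss3^2 + 2*a3^2*cc1*ss1*cc2*ss2*cc3^2 + (-1)*a3^2*cc1^2*ss2^2*ss3^2 + (-1)*a3^2*cc1^2*ss2^2*cc3^2) * pB2 + ((-1) + ε^2 + (-1)*cc2^2 + 2*cc1*ss1*cc2*ss2 + (-1)*cc1^2 + 2*cc1^2*cc2^2 + (-4)*a2^2*cc1*ss1*cc2*ss2 + b1*b2*a3*ss1*cc2*ss3*ε + (-1)*b1*b2*a3*cc1*ss2*ss3*ε + b1*a2*b3*ss1*cc2*ss3*ε + b1*a2*b3*cc1*ss2*ss3*ε + (-1)*a1*b2*b3*ss1*cc2*ss3*ε + a1*b2*b3*cc1*ss2*ss3*ε + a1*a2*a3*ss1*cc2*ss3*ε + a1*a2*a3*cc1*ss2*ss3*ε) * ps3 + ((-1)*b2^2*b3^2*ss1^2*cc2^2*ss3^2 + (-1)*b2^2*b3^2*ss1^2*cc2^2*cc3^2 + 2*b2^2*b3^2*cc1*ss1*cc2*ss2*ss3^2 + 2*b2^2*b3^2*cc1*ss1*cc2*ss2*cc3^2 + (-1)*b2^2*b3^2*cc1^2*ss2^2*ss3^2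 + (-1)*b2^2*b3^2*cc1^2*ss2^2*cc3^2 + (-1)*b2^2*a3^2*ss1^2*cc2^2*ss3^2 + (-1)*b2^2*a3^2*ss1^2*cc2^2*cc3^2 + 2*b2^2*a3^2*cc1*ss1*cc2*ss2*ss3^2 + 2*b2^2*a3^2*cc1*ss1*cc2*ss2*cc3^2 + (-1)*b2^2*a3^2*cc1^2*ss2^2*ss3^2 + (-1)*b2^2*a3^2*cc1^2*ss2^2*cc3^2 + (-1)*a2^2*b3^2*ss1^2*cc2^2*ss3^2 + (-1)*a2^2*b3^2*ss1^2*cc2^2*cc3^2 + (-2)*a2^2*b3^2*cc1*ss1*cc2*ss2*ss3^2 + (-2)*a2^2*b3^2*cc1*ss1*cc2*ss2*cc3^2 + (-1)*a2^2*b3^2*cc1^2*ss2^2*ss3^2 + (-1)*a2^2*b3^2*cc1^2*ss2^2*cc3^2 + (-1)*a2^2*a3^2*ss1^2*cc2^2*ss3^2 + (-1)*a2^2*a3^2*ss1^2*cc2^2*cc3^2 + (-2)*a2^2*a3^2*cc1*ss1*cc2*ss2*ss3^2 + (-2)*a2^2*a3^2*cc1*ss1*cc2*ss2*cc3^2 +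 (-1)*a2^2*a3^2*cc1^2*ss2^2*ss3^2 + (-1)*a2^2*a3^2*cc1^2*ss2^2*cc3^2) * pB1 + ((-1)*ss1^2*cc2^2*ss3^2 + (-1)*ss1^2*cc2^2*cc3^2 + 2*cc1*ss1*cc2*ss2*ss3^2 + 2*cc1*ss1*cc2*ss2*cc3^2 + (-1)*cc1^2*ss2^2*ss3^2 + (-1)*cc1^2*ss2^2*cc3^2 + (-4)*a2^2*cc1*ss1*cc2*ss2*ss3^2 + (-4)*a2^2*cc1*ss1*cc2*ss2*cc3^2) * pB3 + (1 + (-1)*cc3^2) * pe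
  · linear_combination ((-2)*b3^2*cc3*ss3*ε + 2*a3^2*cc3*ss3*ε + 2*b1*b2*a3*b3^2*ss1*cc2*cc3 + (-2)*b1*b2*a3*b3^2*cc1*ss2*cc3 + 2*b1*b2*a3^3*ss1*cc2*cc3 + (-2)*b1*b2*a3^3*cc1*ss2*cc3 + (-2)*b1*a2*b3^3*ss1*cc2*cc3 + (-2)*b1*a2*b3^3*cc1*ss2*cc3 + (-2)*b1*a2*a3^2*b3*ss1*cc2*cc3 + (-2)*b1*a2*a3^2*b3*cc1*ss2*cc3 + 2*a1*b2*b3^3*ss1*cc2*cc3 + (-2)*a1*b2*b3^3*cc1*ss2*cc3 + 2*a1*b2*a3^2*b3*ss1*cc2*cc3 + (-2)*a1*b2*a3^2*b3*cc1*ss2*cc3 + 2*a1*a2*a3*b3^2*ss1*cc2*cc3 + 2*a1*a2*a3*b3^2*cc1*ss2*cc3 + 2*a1*a2*a3^3*ss1*cc2*cc3 + 2*a1*a2*a3^3*cc1*ss2*cc3) * i00 + (2*b3^2*cc3^2*ε + (-2)*a3^2*cc3^2*ε + 2*b1*b2*a3*b3^2*ss1*cc2*ss3 + (-2)*b1*b2*a3*b3^2*cc1*ss2*ss3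 + 2*b1*b2*a3^3*ss1*cc2*ss3 + (-2)*b1*b2*a3^3*cc1*ss2*ss3 + (-2)*b1*a2*b3^3*ss1*cc2*ss3 + (-2)*b1*a2*b3^3*cc1*ss2*ss3 + (-2)*b1*a2*a3^2*b3*ss1*cc2*ss3 + (-2)*b1*a2*a3^2*b3*cc1*ss2*ss3 + 2*a1*b2*b3^3*ss1*cc2*ss3 + (-2)*a1*b2*b3^3*cc1*ss2*ss3 + 2*a1*b2*a3^2*b3*ss1*cc2*ss3 + (-2)*a1*b2*a3^2*b3*cc1*ss2*ss3 + 2*a1*a2*a3*b3^2*ss1*cc2*ss3 + 2*a1*a2*a3*b3^2*cc1*ss2*ss3 + 2*a1*a2*a3^3*ss1*cc2*ss3 + 2*a1*a2*a3^3*cc1*ss2*ss3) * i01 + (4*a3*b3*cc3*ss3*ε + (-2)*b1*b2*b3^3*ss1*cc2*cc3 + 2*b1*b2*b3^3*cc1*ss2*cc3 + (-2)*b1*b2*a3^2*b3*ss1*cc2*cc3 + 2*b1*b2*a3^2*b3*cc1*ss2*cc3 + (-2)*b1*a2*a3*b3^2*ss1*cc2*cc3 + (-2)*b1*a2*a3*b3^2*cc1*ss2*cc3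 + (-2)*b1*a2*a3^3*ss1*cc2*cc3 + (-2)*b1*a2*a3^3*cc1*ss2*cc3 + 2*a1*b2*a3*b3^2*ss1*cc2*cc3 + (-2)*a1*b2*a3*b3^2*cc1*ss2*cc3 + 2*a1*b2*a3^3*ss1*cc2*cc3 + (-2)*a1*b2*a3^3*cc1*ss2*cc3 + (-2)*a1*a2*b3^3*ss1*cc2*cc3 + (-2)*a1*a2*b3^3*cc1*ss2*cc3 + (-2)*a1*a2*a3^2*b3*ss1*cc2*cc3 + (-2)*a1*a2*a3^2*b3*cc1*ss2*cc3) * r00 + ((-4)*a3*b3*cc3^2*ε + (-2)*b1*b2*b3^3*ss1*cc2*ss3 + 2*b1*b2*b3^3*cc1*ss2*ss3 + (-2)*b1*b2*a3^2*b3*ss1*cc2*ss3 + 2*b1*b2*a3^2*b3*cc1*ss2*ss3 + (-2)*b1*a2*a3*b3^2*ss1*cc2*ss3 + (-2)*b1*a2*a3*b3^2*cc1*ss2*ss3 + (-2)*b1*a2*a3^3*ss1*cc2*ss3 + (-2)*b1*a2*a3^3*cc1*ss2*ss3 + 2*a1*b2*a3*b3^2*ss1*cc2*ss3 + (-2)*a1*b2*a3*b3^2*cc1*ss2*ss3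 + 2*a1*b2*a3^3*ss1*cc2*ss3 + (-2)*a1*b2*a3^3*cc1*ss2*ss3 + (-2)*a1*a2*b3^3*ss1*cc2*ss3 + (-2)*a1*a2*b3^3*cc1*ss2*ss3 + (-2)*a1*a2*a3^2*b3*ss1*cc2*ss3 + (-2)*a1*a2*a3^2*b3*cc1*ss2*ss3) * r01 + ((-4)*a2*b2*cc1*ss1*ss3^2 + (-4)*a2*b2*cc1*ss1*cc3^2) * ps2 + ((-4)*a2*b2*b3^4*cc1*ss1*ss2^2*ss3^2 + (-4)*a2*b2*b3^4*cc1*ss1*ss2^2*cc3^2 + (-4)*a2*b2*b3^4*cc1*ss1*cc2^2*ss3^2 + (-4)*a2*b2*b3^4*cc1*ss1*cc2^2*cc3^2 + (-8)*a2*b2*a3^2*b3^2*cc1*ss1*ss2^2*ss3^2 + (-8)*a2*b2*a3^2*b3^2*cc1*ss1*ss2^2*cc3^2 + (-8)*a2*b2*a3^2*b3^2*cc1*ss1*cc2^2*ss3^2 + (-8)*a2*b2*a3^2*b3^2*cc1*ss1*cc2^2*cc3^2 + (-4)*a2*b2*a3^4*cc1*ss1*ss2^2*ss3^2 + (-4)*a2*b2*a3^4*cc1*ss1*ss2^2*cc3^2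 + (-4)*a2*b2*a3^4*cc1*ss1*cc2^2*ss3^2 + (-4)*a2*b2*a3^4*cc1*ss1*cc2^2*cc3^2) * pB1 + ((-4)*a2*b2*cc1*ss1*ss2^2*ss3^2 + (-4)*a2*b2*cc1*ss1*ss2^2*cc3^2 + (-4)*a2*b2*cc1*ss1*cc2^2*ss3^2 + (-4)*a2*b2*cc1*ss1*cc2^2*cc3^2 + (-4)*a2*b2*b3^2*cc1*ss1*ss2^2*ss3^2 + (-4)*a2*b2*b3^2*cc1*ss1*ss2^2*cc3^2 + (-4)*a2*b2*b3^2*cc1*ss1*cc2^2*ss3^2 + (-4)*a2*b2*b3^2*cc1*ss1*cc2^2*cc3^2 + (-4)*a2*b2*a3^2*cc1*ss1*ss2^2*ss3^2 + (-4)*a2*b2*a3^2*cc1*ss1*ss2^2*cc3^2 + (-4)*a2*b2*a3^2*cc1*ss1*cc2^2*ss3^2 + (-4)*a2*b2*a3^2*cc1*ss1*cc2^2*cc3^2 + (-2)*b1*b2*b3*ss1*cc2*cc3*ε + 2*b1*b2*b3*ss1*cc2*cc3*ss3^2*ε + 2*b1*b2*b3*ss1*cc2*cc3^3*ε + 2*b1*b2*b3*cc1*ss2*cc3*ε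 + (-2)*b1*b2*b3*cc1*ss2*cc3*ss3^2*ε + (-2)*b1*b2*b3*cc1*ss2*cc3^3*ε + (-2)*b1*a2*a3*ss1*cc2*cc3*ε + 2*b1*a2*a3*ss1*cc2*cc3*ss3^2*ε + 2*b1*a2*a3*ss1*cc2*cc3^3*ε + (-2)*b1*a2*a3*cc1*ss2*cc3*ε + 2*b1*a2*a3*cc1*ss2*cc3*ss3^2*ε + 2*b1*a2*a3*cc1*ss2*cc3^3*ε + 2*a1*b2*a3*ss1*cc2*cc3*ε + (-2)*a1*b2*a3*ss1*cc2*cc3*ss3^2*ε + (-2)*a1*b2*a3*ss1*cc2*cc3^3*ε + (-2)*a1*b2*a3*cc1*ss2*cc3*ε + 2*a1*b2*a3*cc1*ss2*cc3*ss3^2*ε + 2*a1*b2*a3*cc1*ss2*cc3^3*ε + (-2)*a1*a2*b3*ss1*cc2*cc3*ε + 2*a1*a2*b3*ss1*cc2*cc3*ss3^2*ε + 2*a1*a2*b3*ss1*cc2*cc3^3*ε + (-2)*a1*a2*b3*cc1*ss2*cc3*ε + 2*a1*a2*b3*cc1*ss2*cc3*ss3^2*ε + 2*a1*a2*b3*cc1*ss2*cc3^3*ε)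 * pB3 + ((-4)*a2*b2*cc1*ss1 + 2*b1*b2*b3*ss1*cc2*cc3*ε + (-2)*b1*b2*b3*cc1*ss2*cc3*ε + 2*b1*a2*a3*ss1*cc2*cc3*ε + 2*b1*a2*a3*cc1*ss2*cc3*ε + (-2)*a1*b2*a3*ss1*cc2*cc3*ε + 2*a1*b2*a3*cc1*ss2*cc3*ε + 2*a1*a2*b3*ss1*cc2*cc3*ε + 2*a1*a2*b3*cc1*ss2*cc3*ε) * ps3 + (4*a3*b3*cc3*ss3) * pe
  · linear_combination ((-1)*b1*b2*ss1*ss2*cc3 + (-1)*b1*b2*cc1*cc2*cc3 + b1*b2*b3^2*ss1*ss2*cc3 + b1*b2*b3^2*cc1*cc2*cc3 + b1*a2*a3*b3*ss1*ss2*cc3 + (-1)*b1*a2*a3*b3*cc1*cc2*cc3 + (-1)*a1*b2*a3*b3*ss1*ss2*cc3 + (-1)*a1*b2*a3*b3*cc1*cc2*cc3 + (-1)*a1*a2*ss1*ss2*cc3 + a1*a2*cc1*cc2*cc3 + a1*a2*b3^2*ss1*ss2*cc3 + (-1)*a1*a2*b3^2*cc1*cc2*cc3) * i00 + ((-1)*b1*b2*ss1*ss2*ss3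 + (-1)*b1*b2*cc1*cc2*ss3 + b1*b2*b3^2*ss1*ss2*ss3 + b1*b2*b3^2*cc1*cc2*ss3 + b1*a2*a3*b3*ss1*ss2*ss3 + (-1)*b1*a2*a3*b3*cc1*cc2*ss3 + (-1)*a1*b2*a3*b3*ss1*ss2*ss3 + (-1)*a1*b2*a3*b3*cc1*cc2*ss3 + (-1)*a1*a2*ss1*ss2*ss3 + a1*a2*cc1*cc2*ss3 + a1*a2*b3^2*ss1*ss2*ss3 + (-1)*a1*a2*b3^2*cc1*cc2*ss3) * i01 + ((-1)*b3*cc3^2*ε + b1*b2*a3*b3*ss1*ss2*cc3 + b1*b2*a3*b3*cc1*cc2*cc3 + b1*a2*ss1*ss2*cc3 + (-1)*b1*a2*cc1*cc2*cc3 + (-1)*b1*a2*b3^2*ss1*ss2*cc3 + b1*a2*b3^2*cc1*cc2*cc3 + (-1)*a1*b2*ss1*ss2*cc3 + (-1)*a1*b2*cc1*cc2*cc3 + a1*b2*b3^2*ss1*ss2*cc3 + a1*b2*b3^2*cc1*cc2*cc3 + a1*a2*a3*b3*ss1*ss2*cc3 + (-1)*a1*a2*a3*b3*cc1*cc2*cc3)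 * r00 + ((-1)*b3*cc3*ss3*ε + b1*b2*a3*b3*ss1*ss2*ss3 + b1*b2*a3*b3*cc1*cc2*ss3 + b1*a2*ss1*ss2*ss3 + (-1)*b1*a2*cc1*cc2*ss3 + (-1)*b1*a2*b3^2*ss1*ss2*ss3 + b1*a2*b3^2*cc1*cc2*ss3 + (-1)*a1*b2*ss1*ss2*ss3 + (-1)*a1*b2*cc1*cc2*ss3 + a1*b2*b3^2*ss1*ss2*ss3 + a1*b2*b3^2*cc1*cc2*ss3 + a1*a2*a3*b3*ss1*ss2*ss3 + (-1)*a1*a2*a3*b3*cc1*cc2*ss3) * r01 + ((-1)*b2^2*b3*ss1^2*ss2^2*ss3^2 + (-1)*b2^2*b3*ss1^2*ss2^2*cc3^2 + (-2)*b2^2*b3*cc1*ss1*cc2*ss2*ss3^2 + (-2)*b2^2*b3*cc1*ss1*cc2*ss2*cc3^2 + (-1)*b2^2*b3*cc1^2*cc2^2*ss3^2 + (-1)*b2^2*b3*cc1^2*cc2^2*cc3^2 + b2^2*b3^3*ss1^2*ss2^2*ss3^2 + b2^2*b3^3*ss1^2*ss2^2*cc3^2 + 2*b2^2*b3^3*cc1*ss1*cc2*ss2*ss3^2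 + 2*b2^2*b3^3*cc1*ss1*cc2*ss2*cc3^2 + b2^2*b3^3*cc1^2*cc2^2*ss3^2 + b2^2*b3^3*cc1^2*cc2^2*cc3^2 + b2^2*a3^2*b3*ss1^2*ss2^2*ss3^2 + b2^2*a3^2*b3*ss1^2*ss2^2*cc3^2 + 2*b2^2*a3^2*b3*cc1*ss1*cc2*ss2*ss3^2 + 2*b2^2*a3^2*b3*cc1*ss1*cc2*ss2*cc3^2 + b2^2*a3^2*b3*cc1^2*cc2^2*ss3^2 + b2^2*a3^2*b3*cc1^2*cc2^2*cc3^2 + (-1)*a2^2*b3*ss1^2*ss2^2*ss3^2 + (-1)*a2^2*b3*ss1^2*ss2^2*cc3^2 + 2*a2^2*b3*cc1*ss1*cc2*ss2*ss3^2 + 2*a2^2*b3*cc1*ss1*cc2*ss2*cc3^2 + (-1)*a2^2*b3*cc1^2*cc2^2*ss3^2 + (-1)*a2^2*b3*cc1^2*cc2^2*cc3^2 + a2^2*b3^3*ss1^2*ss2^2*ss3^2 + a2^2*b3^3*ss1^2*ss2^2*cc3^2 + (-2)*a2^2*b3^3*cc1*ss1*cc2*ss2*ss3^2 + (-2)*a2^2*b3^3*cc1*ss1*cc2*ss2*cc3^2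 + a2^2*b3^3*cc1^2*cc2^2*ss3^2 + a2^2*b3^3*cc1^2*cc2^2*cc3^2 + a2^2*a3^2*b3*ss1^2*ss2^2*ss3^2 + a2^2*a3^2*b3*ss1^2*ss2^2*cc3^2 + (-2)*a2^2*a3^2*b3*cc1*ss1*cc2*ss2*ss3^2 + (-2)*a2^2*a3^2*b3*cc1*ss1*cc2*ss2*cc3^2 + a2^2*a3^2*b3*cc1^2*cc2^2*ss3^2 + a2^2*a3^2*b3*cc1^2*cc2^2*cc3^2) * pB1 + (b3*ss1^2*ss2^2*ss3^2 + b3*ss1^2*ss2^2*cc3^2 + 2*b3*cc1*ss1*cc2*ss2*ss3^2 + 2*b3*cc1*ss1*cc2*ss2*cc3^2 + b3*cc1^2*cc2^2*ss3^2 + b3*cc1^2*cc2^2*cc3^2 + (-4)*a2^2*b3*cc1*ss1*cc2*ss2*ss3^2 + (-4)*a2^2*b3*cc1*ss1*cc2*ss2*cc3^2 + (-1)*b1*a2*ss1*ss2*cc3*ε + b1*a2*ss1*ss2*cc3*ss3^2*ε + b1*a2*ss1*ss2*cc3^3*ε + b1*a2*cc1*cc2*cc3*ε + (-1)*b1*a2*cc1*cc2*cc3*ss3^2*ε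 + (-1)*b1*a2*cc1*cc2*cc3^3*ε + a1*b2*ss1*ss2*cc3*ε + (-1)*a1*b2*ss1*ss2*cc3*ss3^2*ε + (-1)*a1*b2*ss1*ss2*cc3^3*ε + a1*b2*cc1*cc2*cc3*ε + (-1)*a1*b2*cc1*cc2*cc3*ss3^2*ε + (-1)*a1*b2*cc1*cc2*cc3^3*ε) * pB3 + ((-1)*b3*ss1^2*ss2^2*ss3^2 + (-1)*b3*ss1^2*ss2^2*cc3^2 + (-2)*b3*cc1*ss1*cc2*ss2*ss3^2 + (-2)*b3*cc1*ss1*cc2*ss2*cc3^2 + (-1)*b3*cc1^2*cc2^2*ss3^2 + (-1)*b3*cc1^2*cc2^2*cc3^2 + b3^3*ss1^2*ss2^2*ss3^2 + b3^3*ss1^2*ss2^2*cc3^2 + 2*b3^3*cc1*ss1*cc2*ss2*ss3^2 + 2*b3^3*cc1*ss1*cc2*ss2*cc3^2 + b3^3*cc1^2*cc2^2*ss3^2 + b3^3*cc1^2*cc2^2*cc3^2 + a3^2*b3*ss1^2*ss2^2*ss3^2 + a3^2*b3*ss1^2*ss2^2*cc3^2 + 2*a3^2*b3*cc1*ss1*cc2*ss2*ss3^2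 + 2*a3^2*b3*cc1*ss1*cc2*ss2*cc3^2 + a3^2*b3*cc1^2*cc2^2*ss3^2 + a3^2*b3*cc1^2*cc2^2*cc3^2) * pB2 + ((-1)*b1*b2*a3*b3*ss1*ss2*cc3*ε + (-1)*b1*b2*a3*b3*cc1*cc2*cc3*ε + b1*a2*ss1*ss2*cc3*ε + (-1)*b1*a2*cc1*cc2*cc3*ε + (-1)*b1*a2*a3^2*ss1*ss2*cc3*ε + b1*a2*a3^2*cc1*cc2*cc3*ε + (-1)*a1*b2*ss1*ss2*cc3*ε + (-1)*a1*b2*cc1*cc2*cc3*ε + a1*b2*a3^2*ss1*ss2*cc3*ε + a1*b2*a3^2*cc1*cc2*cc3*ε + (-1)*a1*a2*a3*b3*ss1*ss2*cc3*ε + a1*a2*a3*b3*cc1*cc2*cc3*ε) * ps3 + ((-1)*b3*cc3^2) * pe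
  · linear_combination (b1*b2*ss1*cc2*ss3 + (-1)*b1*b2*cc1*ss2*ss3 + (-1)*b1*b2*b3^2*ss1*cc2*ss3 + b1*b2*b3^2*cc1*ss2*ss3 + b1*a2*a3*b3*ss1*cc2*ss3 + b1*a2*a3*b3*cc1*ss2*ss3 + (-1)*a1*b2*a3*b3*ss1*cc2*ss3 + a1*b2*a3*b3*cc1*ss2*ss3 + a1*a2*ss1*cc2*ss3 + a1*a2*cc1*ss2*ss3 + (-1)*a1*a2*b3^2*ss1*cc2*ss3 + (-1)*a1*a2*b3^2*cc1*ss2*ss3) * i00 + ((-1)*b1*b2*ss1*cc2*cc3 + b1*b2*cc1*ss2*cc3 + b1*b2*b3^2*ss1*cc2*cc3 + (-1)*b1*b2*b3^2*cc1*ss2*cc3 + (-1)*b1*a2*a3*b3*ss1*cc2*cc3 + (-1)*b1*a2*a3*b3*cc1*ss2*cc3 + a1*b2*a3*b3*ss1*cc2*cc3 + (-1)*a1*b2*a3*b3*cc1*ss2*cc3 + (-1)*a1*a2*ss1*cc2*cc3 + (-1)*a1*a2*cc1*ss2*cc3 + a1*a2*b3^2*ss1*cc2*cc3 + a1*a2*b3^2*cc1*ss2*cc3)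 * i01 + ((-1)*b3*ss3^2*ε + b1*b2*a3*b3*ss1*cc2*ss3 + (-1)*b1*b2*a3*b3*cc1*ss2*ss3 + (-1)*b1*a2*ss1*cc2*ss3 + (-1)*b1*a2*cc1*ss2*ss3 + b1*a2*b3^2*ss1*cc2*ss3 + b1*a2*b3^2*cc1*ss2*ss3 + a1*b2*ss1*cc2*ss3 + (-1)*a1*b2*cc1*ss2*ss3 + (-1)*a1*b2*b3^2*ss1*cc2*ss3 + a1*b2*b3^2*cc1*ss2*ss3 + a1*a2*a3*b3*ss1*cc2*ss3 + a1*a2*a3*b3*cc1*ss2*ss3) * r00 + (b3*cc3*ss3*ε + (-1)*b1*b2*a3*b3*ss1*cc2*cc3 + b1*b2*a3*b3*cc1*ss2*cc3 + b1*a2*ss1*cc2*cc3 + b1*a2*cc1*ss2*cc3 + (-1)*b1*a2*b3^2*ss1*cc2*cc3 + (-1)*b1*a2*b3^2*cc1*ss2*cc3 + (-1)*a1*b2*ss1*cc2*cc3 + a1*b2*cc1*ss2*cc3 + a1*b2*b3^2*ss1*cc2*cc3 + (-1)*a1*b2*b3^2*cc1*ss2*cc3 + (-1)*a1*a2*a3*b3*ss1*cc2*cc3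 + (-1)*a1*a2*a3*b3*cc1*ss2*cc3) * r01 + (b3 + (-1)*b3*ε^2 + (-1)*b1*b2*a3*b3*ss1*cc2*ss3*ε + b1*b2*a3*b3*cc1*ss2*ss3*ε + (-1)*b1*a2*ss1*cc2*ss3*ε + (-1)*b1*a2*cc1*ss2*ss3*ε + b1*a2*a3^2*ss1*cc2*ss3*ε + b1*a2*a3^2*cc1*ss2*ss3*ε + a1*b2*ss1*cc2*ss3*ε + (-1)*a1*b2*cc1*ss2*ss3*ε + (-1)*a1*b2*a3^2*ss1*cc2*ss3*ε + a1*b2*a3^2*cc1*ss2*ss3*ε + (-1)*a1*a2*a3*b3*ss1*cc2*ss3*ε + (-1)*a1*a2*a3*b3*cc1*ss2*ss3*ε) * ps3 + ((-1)*b2^2*b3*ss1^2*cc2^2*ss3^2 + (-1)*b2^2*b3*ss1^2*cc2^2*cc3^2 + 2*b2^2*b3*cc1*ss1*cc2*ss2*ss3^2 + 2*b2^2*b3*cc1*ss1*cc2*ss2*cc3^2 + (-1)*b2^2*b3*cc1^2*ss2^2*ss3^2 + (-1)*b2^2*b3*cc1^2*ss2^2*cc3^2 + b2^2*b3^3*ss1^2*cc2^2*ss3^2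 + b2^2*b3^3*ss1^2*cc2^2*cc3^2 + (-2)*b2^2*b3^3*cc1*ss1*cc2*ss2*ss3^2 + (-2)*b2^2*b3^3*cc1*ss1*cc2*ss2*cc3^2 + b2^2*b3^3*cc1^2*ss2^2*ss3^2 + b2^2*b3^3*cc1^2*ss2^2*cc3^2 + b2^2*a3^2*b3*ss1^2*cc2^2*ss3^2 + b2^2*a3^2*b3*ss1^2*cc2^2*cc3^2 + (-2)*b2^2*a3^2*b3*cc1*ss1*cc2*ss2*ss3^2 + (-2)*b2^2*a3^2*b3*cc1*ss1*cc2*ss2*cc3^2 + b2^2*a3^2*b3*cc1^2*ss2^2*ss3^2 + b2^2*a3^2*b3*cc1^2*ss2^2*cc3^2 + (-1)*a2^2*b3*ss1^2*cc2^2*ss3^2 + (-1)*a2^2*b3*ss1^2*cc2^2*cc3^2 + (-2)*a2^2*b3*cc1*ss1*cc2*ss2*ss3^2 + (-2)*a2^2*b3*cc1*ss1*cc2*ss2*cc3^2 + (-1)*a2^2*b3*cc1^2*ss2^2*ss3^2 + (-1)*a2^2*b3*cc1^2*ss2^2*cc3^2 + a2^2*b3^3*ss1^2*cc2^2*ss3^2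 + a2^2*b3^3*ss1^2*cc2^2*cc3^2 + 2*a2^2*b3^3*cc1*ss1*cc2*ss2*ss3^2 + 2*a2^2*b3^3*cc1*ss1*cc2*ss2*cc3^2 + a2^2*b3^3*cc1^2*ss2^2*ss3^2 + a2^2*b3^3*cc1^2*ss2^2*cc3^2 + a2^2*a3^2*b3*ss1^2*cc2^2*ss3^2 + a2^2*a3^2*b3*ss1^2*cc2^2*cc3^2 + 2*a2^2*a3^2*b3*cc1*ss1*cc2*ss2*ss3^2 + 2*a2^2*a3^2*b3*cc1*ss1*cc2*ss2*cc3^2 + a2^2*a3^2*b3*cc1^2*ss2^2*ss3^2 + a2^2*a3^2*b3*cc1^2*ss2^2*cc3^2) * pB1 + (b3*ss1^2*cc2^2*ss3^2 + b3*ss1^2*cc2^2*cc3^2 + (-2)*b3*cc1*ss1*cc2*ss2*ss3^2 + (-2)*b3*cc1*ss1*cc2*ss2*cc3^2 + b3*cc1^2*ss2^2*ss3^2 + b3*cc1^2*ss2^2*cc3^2 + 4*a2^2*b3*cc1*ss1*cc2*ss2*ss3^2 + 4*a2^2*b3*cc1*ss1*cc2*ss2*cc3^2 + b1*a2*ss1*cc2*ss3*ε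 + (-1)*b1*a2*ss1*cc2*ss3^3*ε + (-1)*b1*a2*ss1*cc2*cc3^2*ss3*ε + b1*a2*cc1*ss2*ss3*ε + (-1)*b1*a2*cc1*ss2*ss3^3*ε + (-1)*b1*a2*cc1*ss2*cc3^2*ss3*ε + (-1)*a1*b2*ss1*cc2*ss3*ε + a1*b2*ss1*cc2*ss3^3*ε + a1*b2*ss1*cc2*cc3^2*ss3*ε + a1*b2*cc1*ss2*ss3*ε + (-1)*a1*b2*cc1*ss2*ss3^3*ε + (-1)*a1*b2*cc1*ss2*cc3^2*ss3*ε) * pB3 + ((-1)*b3*ss1^2*cc2^2*ss3^2 + (-1)*b3*ss1^2*cc2^2*cc3^2 + 2*b3*cc1*ss1*cc2*ss2*ss3^2 + 2*b3*cc1*ss1*cc2*ss2*cc3^2 + (-1)*b3*cc1^2*ss2^2*ss3^2 + (-1)*b3*cc1^2*ss2^2*cc3^2 + b3^3*ss1^2*cc2^2*ss3^2 + b3^3*ss1^2*cc2^2*cc3^2 + (-2)*b3^3*cc1*ss1*cc2*ss2*ss3^2 + (-2)*b3^3*cc1*ss1*cc2*ss2*cc3^2 + b3^3*cc1^2*ss2^2*ss3^2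 + b3^3*cc1^2*ss2^2*cc3^2 + a3^2*b3*ss1^2*cc2^2*ss3^2 + a3^2*b3*ss1^2*cc2^2*cc3^2 + (-2)*a3^2*b3*cc1*ss1*cc2*ss2*ss3^2 + (-2)*a3^2*b3*cc1*ss1*cc2*ss2*cc3^2 + a3^2*b3*cc1^2*ss2^2*ss3^2 + a3^2*b3*cc1^2*ss2^2*cc3^2) * pB2 + ((-1)*b3 + b3*cc3^2) * pe

set_option maxHeartbeats 2000000 in
lemma extract (t1 t2 t3 ξ1 ξ2 ξ3 ε : ℝ) (ht3 : t3 ∈ Set.Ioo 0 π) (hε : ε = 1 ∨ ε = -1)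
    (heq : hMat ξ1 * aMat t1 * hMat ξ2 * aMat t2 * hMat ξ3 * aMat t3
      = (ε : ℂ) • (1 : Matrix (Fin 2) (Fin 2) ℂ)) :
    Real.sin t1 * Real.sin t2 * Real.cos ξ2 = Real.cos t1 * Real.cos t2 - Real.cos t3 ∧
    Real.sin t1 * Real.sin ξ2 = Real.sin t3 * Real.sin ξ3 ∧
    Real.sin (ξ3/2) * (Real.cos (t2/2) * Real.cos (t3/2) + Real.sin (t2/2) * Real.sin (t3/2))
      = -ε * (Real.sin (ξ1/2) * Real.cos (ξ2/2) + Real.cos (ξ1/2) * Real.sin (ξ2/2))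
          * Real.cos (t1/2) := by
  have pe : ε^2 = 1 := by rcases hε with h|h <;> rw [h] <;> norm_num
  rw [hMat_cs ξ1, hMat_cs ξ2, hMat_cs ξ3] at heq
  have h00 := Matrix.ext_iff.mpr heq 0 0
  have h01 := Matrix.ext_iff.mpr heq 0 1
  simp [aMat, Matrix.mul_apply, Fin.sum_univ_two, Matrix.smul_apply, Matrix.one_apply,
    -Complex.ofReal_cos, -Complex.ofReal_sin] at h00 h01
  have r00 := congrArg Complex.re h00
  have i00 := congrArg Complex.im h00
  have r01 := congrArg Complex.re h01
  have i01 := congrArg Complex.im h01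
  simp only [Complex.add_re, Complex.sub_re, Complex.neg_re, Complex.mul_re, Complex.add_im,
    Complex.sub_im, Complex.neg_im, Complex.mul_im, Complex.I_re, Complex.I_im,
    Complex.ofReal_re, Complex.ofReal_im, Complex.zero_re, Complex.zero_im] at r00 i00 r01 i01
  obtain ⟨g1, g2, g3a, g3b⟩ := realcore (Real.cos (ξ1/2)) (Real.sin (ξ1/2)) (Real.cos (ξ2/2))
    (Real.sin (ξ2/2)) (Real.cos (ξ3/2)) (Real.sin (ξ3/2)) (Real.cos (t1/2)) (Real.sin (t1/2))
    (Real.cos (t2/2)) (Real.sin (t2/2)) (Real.cos (t3/2)) (Real.sin (t3/2)) ε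
    (Real.sin_sq_add_cos_sq _) (Real.sin_sq_add_cos_sq _) (Real.sin_sq_add_cos_sq _)
    (Real.sin_sq_add_cos_sq _) (Real.sin_sq_add_cos_sq _) (Real.sin_sq_add_cos_sq _) pe
    (by linear_combination r00) (by linear_combination i00)
    (by linear_combination r01) (by linear_combination i01)
  have hπ := Real.pi_pos
  have hc3 : 0 < Real.cos (t3/2) :=
    Real.cos_pos_of_mem_Ioo ⟨by linarith [ht3.1], by linarith [ht3.2]⟩
  have hs3 : 0 < Real.sin (t3/2) :=
    Real.sin_pos_of_pos_of_lt_pi (by linarith [ht3.1]) (by linarith [ht3.2])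
  have g3a' : Real.cos (t3/2) * Real.sin (ξ3/2)
      = -ε * (Real.cos (ξ1/2) * Real.sin (ξ2/2) * (Real.cos (t1/2) * Real.cos (t2/2))
        + Real.sin (ξ1/2) * Real.cos (ξ2/2) * (Real.cos (t1/2) * Real.cos (t2/2))
        - (Real.sin (ξ1/2) * Real.cos (ξ2/2) - Real.cos (ξ1/2) * Real.sin (ξ2/2))
          * (Real.sin (t1/2) * Real.sin (t2/2))) :=
    mul_left_cancel₀ (ne_of_gt hc3) (by linear_combination g3a)
  have g3b' : Real.sin (t3/2) * Real.sin (ξ3/2)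
      = -ε * (Real.cos (ξ1/2) * Real.sin (ξ2/2) * (Real.cos (t1/2) * Real.sin (t2/2))
        + Real.sin (ξ1/2) * Real.cos (ξ2/2) * (Real.cos (t1/2) * Real.sin (t2/2))
        + (Real.sin (ξ1/2) * Real.cos (ξ2/2) - Real.cos (ξ1/2) * Real.sin (ξ2/2))
          * (Real.sin (t1/2) * Real.cos (t2/2))) :=
    mul_left_cancel₀ (ne_of_gt hs3) (by linear_combination g3b)
  have hs1d : Real.sin t1 = 2 * Real.sin (t1/2) * Real.cos (t1/2) := by
    rw [← Real.sin_two_mul]; congr 1; ring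
  have hs2d : Real.sin t2 = 2 * Real.sin (t2/2) * Real.cos (t2/2) := by
    rw [← Real.sin_two_mul]; congr 1; ring
  have hs3d : Real.sin t3 = 2 * Real.sin (t3/2) * Real.cos (t3/2) := by
    rw [← Real.sin_two_mul]; congr 1; ring
  have hc1d : Real.cos t1 = 2 * Real.cos (t1/2)^2 - 1 := by
    rw [← Real.cos_two_mul]; congr 1; ring
  have hc2d : Real.cos t2 = 2 * Real.cos (t2/2)^2 - 1 := by
    rw [← Real.cos_two_mul]; congr 1; ring
  have hc3d : Real.cos t3 = 2 * Real.cos (t3/2)^2 - 1 := by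
    rw [← Real.cos_two_mul]; congr 1; ring
  have hcx2d : Real.cos ξ2 = 2 * Real.cos (ξ2/2)^2 - 1 := by
    rw [← Real.cos_two_mul]; congr 1; ring
  have hsx2d : Real.sin ξ2 = 2 * Real.sin (ξ2/2) * Real.cos (ξ2/2) := by
    rw [← Real.sin_two_mul]; congr 1; ring
  have hsx3d : Real.sin ξ3 = 2 * Real.sin (ξ3/2) * Real.cos (ξ3/2) := by
    rw [← Real.sin_two_mul]; congr 1; ring
  refine ⟨?_, ?_, ?_⟩
  · rw [hs1d, hs2d, hcx2d, hc1d, hc2d, hc3d]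
    linear_combination 2*g1 + (-2*Real.cos (t1/2)^2) * (Real.sin_sq_add_cos_sq (t2/2))
      + (-2*Real.cos (t2/2)^2) * (Real.sin_sq_add_cos_sq (t1/2))
      + (4*Real.cos (t1/2)*Real.sin (t1/2)*Real.cos (t2/2)*Real.sin (t2/2))
          * (Real.sin_sq_add_cos_sq (ξ2/2))
      + 2 * (Real.sin_sq_add_cos_sq (t3/2))
  · rw [hs1d, hsx2d, hs3d, hsx3d]
    linear_combination g2
  · linear_combination Real.cos (t2/2) * g3a' + Real.sin (t2/2) * g3b'
      + (-(ε * (Real.sin (ξ1/2) * Real.cos (ξ2/2) + Real.cos (ξ1/2) * Real.sin (ξ2/2))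
          * Real.cos (t1/2))) * (Real.sin_sq_add_cos_sq (t2/2))


set_option maxHeartbeats 8000000 in
/-- For a spherical triangle with side lengths `t₁₂, t₂₃, t₃₁ ∈ (0,π)`
(positive definiteness of the cosine Gram matrix) and exterior angles `φ₁, φ₂, φ₃`, if
`ξ₁, ξ₂, ξ₃ ∈ [0,2π]` satisfy `h_{ξ₁} a_{t₁₂} h_{ξ₂} a_{t₂₃} h_{ξ₃} a_{t₃₁} = ε·I₂` with
`ε = ±1`, then `ξ_k = φ_k` for all `k` if `ε = −1`, and `ξ_k = 2π − φ_k` for all `k`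
if `ε = +1`. -/
theorem stmt_11 (t12 t23 t31 : ℝ)
    (h12 : t12 ∈ Set.Ioo 0 π) (h23 : t23 ∈ Set.Ioo 0 π) (h31 : t31 ∈ Set.Ioo 0 π)
    (hpos : (!![1, Real.cos t12, Real.cos t31;
                Real.cos t12, 1, Real.cos t23;
                Real.cos t31, Real.cos t23, 1] : Matrix (Fin 3) (Fin 3) ℝ).PosDef)
    (ξ₁ ξ₂ ξ₃ : ℝ) (hξ₁ : ξ₁ ∈ Set.Icc 0 (2 * π)) (hξ₂ : ξ₂ ∈ Set.Icc 0 (2 * π))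
    (hξ₃ : ξ₃ ∈ Set.Icc 0 (2 * π)) (ε : ℝ) (hε : ε = 1 ∨ ε = -1)
    (heq : hMat ξ₁ * aMat t12 * hMat ξ₂ * aMat t23 * hMat ξ₃ * aMat t31
      = (ε : ℂ) • (1 : Matrix (Fin 2) (Fin 2) ℂ)) :
    (ε = -1 → ξ₁ = extAngle t12 t31 t23 ∧ ξ₂ = extAngle t12 t23 t31
        ∧ ξ₃ = extAngle t23 t31 t12) ∧
    (ε = 1 → ξ₁ = 2 * π - extAngle t12 t31 t23 ∧ ξ₂ = 2 * π - extAngle t12 t23 t31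
        ∧ ξ₃ = 2 * π - extAngle t23 t31 t12) := by
  have hπ := Real.pi_pos
  have pe : ε^2 = 1 := by rcases hε with h|h <;> rw [h] <;> norm_num
  -- cyclic permutations of the matrix equation
  have hB0 : (hMat ξ₁ * aMat t12 * hMat ξ₂ * aMat t23) * (hMat ξ₃ * aMat t31)
      = (ε:ℂ) • 1 := by rw [← mul_assoc]; exact heq
  have hB1 := cyc pe hB0
  have heqB : hMat ξ₃ * aMat t31 * hMat ξ₁ * aMat t12 * hMat ξ₂ * aMat t23 = (ε:ℂ) • 1 := by
    rw [← hB1]; simp only [mul_assoc]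
  have hC0 : (hMat ξ₃ * aMat t31 * hMat ξ₁ * aMat t12) * (hMat ξ₂ * aMat t23)
      = (ε:ℂ) • 1 := by rw [← mul_assoc]; exact heqB
  have hC1 := cyc pe hC0
  have heqC : hMat ξ₂ * aMat t23 * hMat ξ₃ * aMat t31 * hMat ξ₁ * aMat t12 = (ε:ℂ) • 1 := by
    rw [← hC1]; simp only [mul_assoc]
  obtain ⟨C1a, C2a, C3a⟩ := extract t12 t23 t31 ξ₁ ξ₂ ξ₃ ε h31 hε heq
  obtain ⟨C1b, C2b, C3b⟩ := extract t31 t12 t23 ξ₃ ξ₁ ξ₂ ε h23 hε heqB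
  obtain ⟨C1c, C2c, C3c⟩ := extract t23 t31 t12 ξ₂ ξ₃ ξ₁ ε h12 hε heqC

  have hdet : 0 < 1 - Real.cos t12^2 - Real.cos t23^2 - Real.cos t31^2
      + 2*(Real.cos t12*Real.cos t23*Real.cos t31) := by
    have hd := hpos.det_pos
    simp [Matrix.det_fin_three] at hd
    nlinarith only [hd]
  have sp12 : 0 < Real.sin t12 := Real.sin_pos_of_pos_of_lt_pi h12.1 h12.2
  have sp23 : 0 < Real.sin t23 := Real.sin_pos_of_pos_of_lt_pi h23.1 h23.2
  have sp31 : 0 < Real.sin t31 := Real.sin_pos_of_pos_of_lt_pi h31.1 h31.2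
  have py12 : Real.sin t12^2 + Real.cos t12^2 = 1 := Real.sin_sq_add_cos_sq t12
  have py23 : Real.sin t23^2 + Real.cos t23^2 = 1 := Real.sin_sq_add_cos_sq t23
  have py31 : Real.sin t31^2 + Real.cos t31^2 = 1 := Real.sin_sq_add_cos_sq t31
  -- strict bounds on the cosines of the ξ's
  have hSa : (Real.sin t12*Real.sin t23)^2
      - (Real.cos t12*Real.cos t23 - Real.cos t31)^2 > 0 := by
    nlinarith only [hdet, py12, py23]
  have hSb : (Real.sin t31*Real.sin t12)^2
      - (Real.cos t31*Real.cos t12 - Real.cos t23)^2 > 0 := by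
    nlinarith only [hdet, py31, py12]
  have hSc : (Real.sin t23*Real.sin t31)^2
      - (Real.cos t23*Real.cos t31 - Real.cos t12)^2 > 0 := by
    nlinarith only [hdet, py23, py31]
  have hc2a : (Real.sin t12*Real.sin t23)^2 * Real.cos ξ₂^2
      = (Real.cos t12*Real.cos t23 - Real.cos t31)^2 := by
    linear_combination (Real.sin t12*Real.sin t23*Real.cos ξ₂
      + (Real.cos t12*Real.cos t23 - Real.cos t31)) * C1a
  have hc2b : (Real.sin t31*Real.sin t12)^2 * Real.cos ξ₁^2
      = (Real.cos t31*Real.cos t12 - Real.cos t23)^2 := by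
    linear_combination (Real.sin t31*Real.sin t12*Real.cos ξ₁
      + (Real.cos t31*Real.cos t12 - Real.cos t23)) * C1b
  have hc2c : (Real.sin t23*Real.sin t31)^2 * Real.cos ξ₃^2
      = (Real.cos t23*Real.cos t31 - Real.cos t12)^2 := by
    linear_combination (Real.sin t23*Real.sin t31*Real.cos ξ₃
      + (Real.cos t23*Real.cos t31 - Real.cos t12)) * C1c
  have hq2 : Real.cos ξ₂^2 < 1 := by nlinarith only [hSa, hc2a, mul_pos sp12 sp23]
  have hq1 : Real.cos ξ₁^2 < 1 := by nlinarith only [hSb, hc2b, mul_pos sp31 sp12]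
  have hq3 : Real.cos ξ₃^2 < 1 := by nlinarith only [hSc, hc2c, mul_pos sp23 sp31]
  have hb2 : -1 < Real.cos ξ₂ ∧ Real.cos ξ₂ < 1 := by
    constructor <;>
      nlinarith only [hq2, sq_nonneg (Real.cos ξ₂ - 1), sq_nonneg (Real.cos ξ₂ + 1)]
  have hb1 : -1 < Real.cos ξ₁ ∧ Real.cos ξ₁ < 1 := by
    constructor <;>
      nlinarith only [hq1, sq_nonneg (Real.cos ξ₁ - 1), sq_nonneg (Real.cos ξ₁ + 1)]
  have hb3 : -1 < Real.cos ξ₃ ∧ Real.cos ξ₃ < 1 := by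
    constructor <;>
      nlinarith only [hq3, sq_nonneg (Real.cos ξ₃ - 1), sq_nonneg (Real.cos ξ₃ + 1)]
  -- the cosine values
  have q1 : Real.cos ξ₁ = (Real.cos t12 * Real.cos t31 - Real.cos t23)
      / (Real.sin t12 * Real.sin t31) := by
    rw [eq_div_iff (mul_pos sp12 sp31).ne']; linear_combination C1b
  have q2 : Real.cos ξ₂ = (Real.cos t12 * Real.cos t23 - Real.cos t31)
      / (Real.sin t12 * Real.sin t23) := by
    rw [eq_div_iff (mul_pos sp12 sp23).ne']; linear_combination C1a
  have q3 : Real.cos ξ₃ = (Real.cos t23 * Real.cos t31 - Real.cos t12)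
      / (Real.sin t23 * Real.sin t31) := by
    rw [eq_div_iff (mul_pos sp23 sp31).ne']; linear_combination C1c
  -- common positivity facts for the half-angle analysis
  have k10 : 0 < Real.cos (t12/2) :=
    Real.cos_pos_of_mem_Ioo ⟨by linarith only [h12.1, hπ], by linarith only [h12.2]⟩
  have k6 : 0 < Real.cos (t23/2) :=
    Real.cos_pos_of_mem_Ioo ⟨by linarith only [h23.1, hπ], by linarith only [h23.2]⟩
  have k7 : 0 < Real.cos (t31/2) :=
    Real.cos_pos_of_mem_Ioo ⟨by linarith only [h31.1, hπ], by linarith only [h31.2]⟩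
  have k8 : 0 < Real.sin (t23/2) :=
    Real.sin_pos_of_pos_of_lt_pi (by linarith only [h23.1]) (by linarith only [h23.2, hπ])
  have k9 : 0 < Real.sin (t31/2) :=
    Real.sin_pos_of_pos_of_lt_pi (by linarith only [h31.1]) (by linarith only [h31.2, hπ])
  have hK : 0 < Real.cos (t23/2) * Real.cos (t31/2) + Real.sin (t23/2) * Real.sin (t31/2) :=
    add_pos (mul_pos k6 k7) (mul_pos k8 k9)
  have k5 : 0 ≤ Real.sin (ξ₃/2) :=
    Real.sin_nonneg_of_nonneg_of_le_pi (by linarith only [hξ₃.1]) (by linarith only [hξ₃.2])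
  rcases lt_trichotomy (Real.sin ξ₂) 0 with hneg | hzero | hpos2
  · -- all sines negative : ε = 1, ξ = 2π − φ
    have hx3 : Real.sin ξ₃ < 0 := neg_factor sp31 (by
      rw [← C2a]; exact mul_neg_of_pos_of_neg sp12 hneg)
    have hx1 : Real.sin ξ₁ < 0 := neg_factor sp12 (by
      rw [← C2c]; exact mul_neg_of_pos_of_neg sp23 hx3)
    obtain ⟨r1a, r1b⟩ := sinrange_neg hξ₁ hx1
    obtain ⟨r2a, r2b⟩ := sinrange_neg hξ₂ hneg
    obtain ⟨r3a, r3b⟩ := sinrange_neg hξ₃ hx3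
    have hεp : ε = 1 := by
      rcases hε with h|h
      · exact h
      · exfalso
        have k1 : 0 < Real.sin (ξ₁/2) :=
          Real.sin_pos_of_pos_of_lt_pi (by linarith only [r1a, hπ]) (by linarith only [r1b])
        have k4 : 0 < Real.sin (ξ₂/2) :=
          Real.sin_pos_of_pos_of_lt_pi (by linarith only [r2a, hπ]) (by linarith only [r2b])
        have k2 : Real.cos (ξ₂/2) < 0 :=
          Real.cos_neg_of_pi_div_two_lt_of_lt (by linarith only [r2a])
            (by linarith only [r2b, hπ])
        have k3 : Real.cos (ξ₁/2) < 0 :=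
          Real.cos_neg_of_pi_div_two_lt_of_lt (by linarith only [r1a])
            (by linarith only [r1b, hπ])
        have hM : Real.sin (ξ₁/2) * Real.cos (ξ₂/2) + Real.cos (ξ₁/2) * Real.sin (ξ₂/2) < 0 := by
          linarith only [mul_neg_of_pos_of_neg k1 k2, mul_neg_of_neg_of_pos k3 k4]
        rw [h] at C3a
        nlinarith only [C3a, mul_nonneg k5 hK.le, mul_neg_of_neg_of_pos hM k10]
    have e1 : Real.arccos ((Real.cos t12 * Real.cos t31 - Real.cos t23)
        / (Real.sin t12 * Real.sin t31)) = 2*π - ξ₁ := by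
      rw [← q1, ← Real.cos_two_pi_sub]
      exact Real.arccos_cos (by linarith only [r1b]) (by linarith only [r1a])
    have e2 : Real.arccos ((Real.cos t12 * Real.cos t23 - Real.cos t31)
        / (Real.sin t12 * Real.sin t23)) = 2*π - ξ₂ := by
      rw [← q2, ← Real.cos_two_pi_sub]
      exact Real.arccos_cos (by linarith only [r2b]) (by linarith only [r2a])
    have e3 : Real.arccos ((Real.cos t23 * Real.cos t31 - Real.cos t12)
        / (Real.sin t23 * Real.sin t31)) = 2*π - ξ₃ := by
      rw [← q3, ← Real.cos_two_pi_sub]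
      exact Real.arccos_cos (by linarith only [r3b]) (by linarith only [r3a])
    constructor
    · intro h1; rw [hεp] at h1; norm_num at h1
    · intro _
      refine ⟨?_, ?_, ?_⟩
      · simp only [extAngle]; rw [e1]; ring
      · simp only [extAngle]; rw [e2]; ring
      · simp only [extAngle]; rw [e3]; ring
  · exact absurd hzero (sin_ne_zero_of hξ₂ hb2.1 hb2.2)
  · -- all sines positive : ε = −1, ξ = φ
    have hx3 : 0 < Real.sin ξ₃ := pos_factor sp31 (by
      rw [← C2a]; exact mul_pos sp12 hpos2)
    have hx1 : 0 < Real.sin ξ₁ := pos_factor sp12 (by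
      rw [← C2c]; exact mul_pos sp23 hx3)
    obtain ⟨r1a, r1b⟩ := sinrange_pos hξ₁ hx1
    obtain ⟨r2a, r2b⟩ := sinrange_pos hξ₂ hpos2
    obtain ⟨r3a, r3b⟩ := sinrange_pos hξ₃ hx3
    have hεn : ε = -1 := by
      rcases hε with h|h
      · exfalso
        have k1 : 0 < Real.sin (ξ₁/2) :=
          Real.sin_pos_of_pos_of_lt_pi (by linarith only [r1a]) (by linarith only [r1b, hπ])
        have k4 : 0 < Real.sin (ξ₂/2) :=
          Real.sin_pos_of_pos_of_lt_pi (by linarith only [r2a]) (by linarith only [r2b, hπ])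
        have k2 : 0 < Real.cos (ξ₂/2) :=
          Real.cos_pos_of_mem_Ioo ⟨by linarith only [r2a, hπ], by linarith only [r2b]⟩
        have k3 : 0 < Real.cos (ξ₁/2) :=
          Real.cos_pos_of_mem_Ioo ⟨by linarith only [r1a, hπ], by linarith only [r1b]⟩
        have hM : 0 < Real.sin (ξ₁/2) * Real.cos (ξ₂/2) + Real.cos (ξ₁/2) * Real.sin (ξ₂/2) := by
          linarith only [mul_pos k1 k2, mul_pos k3 k4]
        rw [h] at C3a
        nlinarith only [C3a, mul_nonneg k5 hK.le, mul_pos hM k10]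
      · exact h
    have e1 : Real.arccos ((Real.cos t12 * Real.cos t31 - Real.cos t23)
        / (Real.sin t12 * Real.sin t31)) = ξ₁ := by
      rw [← q1]; exact Real.arccos_cos r1a.le r1b.le
    have e2 : Real.arccos ((Real.cos t12 * Real.cos t23 - Real.cos t31)
        / (Real.sin t12 * Real.sin t23)) = ξ₂ := by
      rw [← q2]; exact Real.arccos_cos r2a.le r2b.le
    have e3 : Real.arccos ((Real.cos t23 * Real.cos t31 - Real.cos t12)
        / (Real.sin t23 * Real.sin t31)) = ξ₃ := by
      rw [← q3]; exact Real.arccos_cos r3a.le r3b.le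
    constructor
    · intro _
      exact ⟨e1.symm, e2.symm, e3.symm⟩
    · intro h1; rw [hεn] at h1; norm_num at h1
end

section
/- Define F : ℝ³ → ℝ by F(θ₁₂, θ₁₃, θ₂₃) = det [[1, cos θ₁₂, cos θ₁₃], [cos θ₁₂, 1, cos θ₂₃], [cos θ₁₃, cos θ₂₃, 1]]. Let ε₁, ε₂, ε₃ ∈ {−1,+1} and suppose ε₁θ₂₃ + ε₂θ₁₃ + ε₃θ₁₂ ∈ 2πℤ. Then at the point (θ₁₂, θ₁₃, θ₂₃): ∂F/∂θ₁₂ = −2ε₁ε₂ sin θ₁₂ sin θ₁₃ sin θ₂₃, ∂F/∂θ₁₃ = −2ε₁ε₃ sin θ₁₂ sin θ₁₃ sin θ₂₃, and ∂F/∂θ₂₃ = −2ε₂ε₃ sin θ₁₂ sin θ₁₃ sin θ₂₃. In particular the gradient of F at such a point equals −2ε₁ε₂ε₃ sin θ₁₂ sin θ₁₃ sin θ₂₃ · (ε₃, ε₂, ε₁), so that the first-order variation of F is proportional to the variation of the deficit angle ω^ε = ε₁θ₂₃ + ε₂θ₁₃ + ε₃θ₂₃. -/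
/-!
Expanding the determinant, `F = 1 + 2 cos θ₁₂ cos θ₁₃ cos θ₂₃ - cos² θ₁₂ - cos² θ₁₃ - cos² θ₂₃`,
so `∂F/∂θ₁₂ = 2 sin θ₁₂ (cos θ₁₂ - cos θ₁₃ cos θ₂₃)`, and symmetrically for the other angles.
Flatness says `ε₃θ₁₂ ≡ -(ε₁θ₂₃ + ε₂θ₁₃) (mod 2π)`; taking cosines and using `ε² = 1` gives
`cos θ₁₂ - cos θ₁₃ cos θ₂₃ = -ε₁ε₂ sin θ₁₃ sin θ₂₃`.
-/

/-- The Gram determinant of three unit vectors with pairwise angles `θ₁₂, θ₁₃, θ₂₃`. -/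
noncomputable def gram3 (θ₁₂ θ₁₃ θ₂₃ : ℝ) : ℝ :=
  Matrix.det !![1, Real.cos θ₁₂, Real.cos θ₁₃;
                Real.cos θ₁₂, 1, Real.cos θ₂₃;
                Real.cos θ₁₃, Real.cos θ₂₃, 1]

open Real

theorem gram3_eq (x y z : ℝ) :
    gram3 x y z = 1 + 2 * cos x * cos y * cos z - cos x ^ 2 - cos y ^ 2 - cos z ^ 2 := by
  simp only [gram3, Matrix.det_fin_three, Matrix.of_apply, Matrix.cons_val', Matrix.cons_val_zero,
    Matrix.cons_val_one, Matrix.cons_val_two, Matrix.empty_val', Matrix.cons_val_fin_one,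
    Matrix.head_cons, Matrix.tail_cons, Matrix.head_fin_const]
  ring

theorem gram3_swap (x y z : ℝ) : gram3 x y z = gram3 y x z := by
  simp only [gram3_eq]; ring

theorem gram3_rotate (x y z : ℝ) : gram3 x y z = gram3 z x y := by
  simp only [gram3_eq]; ring

theorem hasDerivAt_gram3_fst (x y z : ℝ) :
    HasDerivAt (fun t => gram3 t y z) (2 * sin x * (cos x - cos y * cos z)) x := by
  simp only [gram3_eq]
  have hcos := hasDerivAt_cos x
  refine ((((((hcos.const_mul 2).mul_const (cos y)).mul_const (cos z)).const_add 1).fun_sub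
    (hcos.fun_pow 2)).sub_const (cos y ^ 2) |>.sub_const (cos z ^ 2)).congr_deriv ?_
  ring

theorem deriv_gram3_fst (x y z : ℝ) :
    deriv (fun t => gram3 t y z) x = 2 * sin x * (cos x - cos y * cos z) :=
  (hasDerivAt_gram3_fst x y z).deriv

theorem cos_eq_of_add_add_eq_two_pi_mul_int {a b c : ℝ} {n : ℤ}
    (h : a + b + c = 2 * π * n) : cos c = cos a * cos b - sin a * sin b := by
  rw [← cos_add, show c = n * (2 * π) - (a + b) by linarith, cos_int_mul_two_pi_sub]

theorem cos_sign_mul {ε : ℝ} (hε : ε = 1 ∨ ε = -1) (x : ℝ) : cos (ε * x) = cos x := by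
  rcases hε with rfl | rfl <;> simp

theorem sin_sign_mul {ε : ℝ} (hε : ε = 1 ∨ ε = -1) (x : ℝ) : sin (ε * x) = ε * sin x := by
  rcases hε with rfl | rfl <;> simp

theorem cos_sub_cos_mul_cos_of_flat {ε₁ ε₂ ε₃ θ₁ θ₂ θ₃ : ℝ} {n : ℤ}
    (hε₁ : ε₁ = 1 ∨ ε₁ = -1) (hε₂ : ε₂ = 1 ∨ ε₂ = -1) (hε₃ : ε₃ = 1 ∨ ε₃ = -1)
    (h : ε₁ * θ₁ + ε₂ * θ₂ + ε₃ * θ₃ = 2 * π * n) :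
    cos θ₃ - cos θ₁ * cos θ₂ = -(ε₁ * ε₂ * sin θ₁ * sin θ₂) := by
  have hcos := cos_eq_of_add_add_eq_two_pi_mul_int h
  rw [cos_sign_mul hε₁, cos_sign_mul hε₂, cos_sign_mul hε₃, sin_sign_mul hε₁,
    sin_sign_mul hε₂] at hcos
  linear_combination hcos

/-- Let `F(θ₁₂,θ₁₃,θ₂₃)` be the Gram determinant of three unit vectors with
pairwise angles `θ₁₂, θ₁₃, θ₂₃`. If `ε₁, ε₂, ε₃ ∈ {−1,+1}` and
`ε₁θ₂₃ + ε₂θ₁₃ + ε₃θ₁₂ ∈ 2πℤ`, then at that point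
`∂F/∂θ₁₂ = −2ε₁ε₂ sin θ₁₂ sin θ₁₃ sin θ₂₃`, `∂F/∂θ₁₃ = −2ε₁ε₃ sin θ₁₂ sin θ₁₃ sin θ₂₃`
and `∂F/∂θ₂₃ = −2ε₂ε₃ sin θ₁₂ sin θ₁₃ sin θ₂₃`. -/
theorem stmt_13 (θ₁₂ θ₁₃ θ₂₃ ε₁ ε₂ ε₃ : ℝ)
    (h₁ : ε₁ = 1 ∨ ε₁ = -1) (h₂ : ε₂ = 1 ∨ ε₂ = -1) (h₃ : ε₃ = 1 ∨ ε₃ = -1)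
    (h : ∃ n : ℤ, ε₁ * θ₂₃ + ε₂ * θ₁₃ + ε₃ * θ₁₂ = 2 * Real.pi * n) :
    deriv (fun t => gram3 t θ₁₃ θ₂₃) θ₁₂
        = -2 * ε₁ * ε₂ * Real.sin θ₁₂ * Real.sin θ₁₃ * Real.sin θ₂₃ ∧
    deriv (fun t => gram3 θ₁₂ t θ₂₃) θ₁₃
        = -2 * ε₁ * ε₃ * Real.sin θ₁₂ * Real.sin θ₁₃ * Real.sin θ₂₃ ∧
    deriv (fun t => gram3 θ₁₂ θ₁₃ t) θ₂₃
        = -2 * ε₂ * ε₃ * Real.sin θ₁₂ * Real.sin θ₁₃ * Real.sin θ₂₃ := by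
  obtain ⟨n, hn⟩ := h
  have flat₁₂ : cos θ₁₂ - cos θ₂₃ * cos θ₁₃ = -(ε₁ * ε₂ * sin θ₂₃ * sin θ₁₃) :=
    cos_sub_cos_mul_cos_of_flat h₁ h₂ h₃ hn
  have flat₁₃ : cos θ₁₃ - cos θ₂₃ * cos θ₁₂ = -(ε₁ * ε₃ * sin θ₂₃ * sin θ₁₂) :=
    cos_sub_cos_mul_cos_of_flat h₁ h₃ h₂ (by linear_combination hn)
  have flat₂₃ : cos θ₂₃ - cos θ₁₃ * cos θ₁₂ = -(ε₂ * ε₃ * sin θ₁₃ * sin θ₁₂) :=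
    cos_sub_cos_mul_cos_of_flat h₂ h₃ h₁ (by linear_combination hn)
  refine ⟨?_, ?_, ?_⟩
  · rw [deriv_gram3_fst]
    linear_combination 2 * sin θ₁₂ * flat₁₂
  · simp_rw [gram3_swap θ₁₂]
    rw [deriv_gram3_fst]
    linear_combination 2 * sin θ₁₃ * flat₁₃
  · simp_rw [gram3_rotate θ₁₂ θ₁₃]
    rw [deriv_gram3_fst]
    linear_combination 2 * sin θ₂₃ * flat₂₃
end

section
/- Let θ₁₂, θ₁₃, θ₂₃ ∈ [0,π]. Then det [[1, cos θ₁₂, cos θ₁₃], [cos θ₁₂, 1, cos θ₂₃], [cos θ₁₃, cos θ₂₃, 1]] = 0 if and only if there exist signs ε₁, ε₂, ε₃ ∈ {−1,+1} such that ε₁θ₂₃ + ε₂θ₁₃ + ε₃θ₁₂ ∈ 2πℤ. -/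
/-- For `θ₁₂, θ₁₃, θ₂₃ ∈ [0,π]`, the Gram determinant of three unit vectors
with pairwise angles `θ₁₂, θ₁₃, θ₂₃` vanishes if and only if there exist signs
`ε₁, ε₂, ε₃ ∈ {−1,+1}` with `ε₁θ₂₃ + ε₂θ₁₃ + ε₃θ₁₂ ∈ 2πℤ`. -/
theorem stmt_15 (θ₁₂ θ₁₃ θ₂₃ : ℝ)
    (h₁₂ : θ₁₂ ∈ Set.Icc 0 Real.pi) (h₁₃ : θ₁₃ ∈ Set.Icc 0 Real.pi)
    (h₂₃ : θ₂₃ ∈ Set.Icc 0 Real.pi) :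
    Matrix.det !![1, Real.cos θ₁₂, Real.cos θ₁₃;
                  Real.cos θ₁₂, 1, Real.cos θ₂₃;
                  Real.cos θ₁₃, Real.cos θ₂₃, 1] = 0 ↔
    ∃ ε₁ ε₂ ε₃ : ℝ, (ε₁ = 1 ∨ ε₁ = -1) ∧ (ε₂ = 1 ∨ ε₂ = -1) ∧ (ε₃ = 1 ∨ ε₃ = -1) ∧
      ∃ n : ℤ, ε₁ * θ₂₃ + ε₂ * θ₁₃ + ε₃ * θ₁₂ = 2 * Real.pi * n := by
  have h1 := Real.sin_sq_add_cos_sq θ₁₂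
  have h2 := Real.sin_sq_add_cos_sq θ₁₃
  have key : Matrix.det !![1, Real.cos θ₁₂, Real.cos θ₁₃;
                  Real.cos θ₁₂, 1, Real.cos θ₂₃;
                  Real.cos θ₁₃, Real.cos θ₂₃, 1] =
      (Real.cos θ₂₃ - Real.cos (θ₁₂ - θ₁₃)) * (Real.cos (θ₁₂ + θ₁₃) - Real.cos θ₂₃) := by
    rw [Matrix.det_fin_three, Real.cos_add, Real.cos_sub]
    simp [Matrix.cons_val_zero, Matrix.cons_val_one]
    nlinarith [h1, h2, sq_nonneg (Real.sin θ₁₂ * Real.sin θ₁₃)]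
  rw [key, mul_eq_zero, sub_eq_zero, sub_eq_zero]
  constructor
  · rintro (h | h)
    · rw [Real.cos_eq_cos_iff] at h
      obtain ⟨k, hk | hk⟩ := h
      · exact ⟨-1, -1, 1, Or.inr rfl, Or.inr rfl, Or.inl rfl, k, by push_cast at hk ⊢; linarith⟩
      · exact ⟨1, -1, 1, Or.inl rfl, Or.inr rfl, Or.inl rfl, k, by push_cast at hk ⊢; linarith⟩
    · rw [Real.cos_eq_cos_iff] at h
      obtain ⟨k, hk | hk⟩ := h
      · exact ⟨1, -1, -1, Or.inl rfl, Or.inr rfl, Or.inr rfl, k, by push_cast at hk ⊢; linarith⟩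
      · exact ⟨1, 1, 1, Or.inl rfl, Or.inl rfl, Or.inl rfl, k, by push_cast at hk ⊢; linarith⟩
  · rintro ⟨ε₁, ε₂, ε₃, (rfl | rfl), (rfl | rfl), (rfl | rfl), n, hn⟩ <;>
    [skip; skip; skip; skip; skip; skip; skip; skip] <;>
    first
    | (left; rw [Real.cos_eq_cos_iff]
       first
       | exact ⟨n, Or.inl (by push_cast; linarith)⟩
       | exact ⟨n, Or.inr (by push_cast; linarith)⟩
       | exact ⟨-n, Or.inl (by push_cast; linarith)⟩
       | exact ⟨-n, Or.inr (by push_cast; linarith)⟩)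
    | (right; rw [Real.cos_eq_cos_iff]
       first
       | exact ⟨n, Or.inl (by push_cast; linarith)⟩
       | exact ⟨n, Or.inr (by push_cast; linarith)⟩
       | exact ⟨-n, Or.inl (by push_cast; linarith)⟩
       | exact ⟨-n, Or.inr (by push_cast; linarith)⟩)
end

section
/- Let M be an n×n real symmetric matrix with det M = 0, and let i ≠ j be indices. Then (det of M with row i and column j deleted)² = (det of M with row i and column i deleted) · (det of M with row j and column j deleted). -/
open Matrix

lemma rank_submatrix_le_aux {m : ℕ} {k : Type*} [Fintype k] [DecidableEq k]
    (M : Matrix (Fin m) (Fin m) ℝ) (f g : k → Fin m) :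
    (M.submatrix f g).rank ≤ M.rank := by
  have h1 : ((1 : Matrix (Fin m) (Fin m) ℝ).submatrix f (Equiv.refl (Fin m))) * M
      = M.submatrix f id := by
    rw [one_submatrix_mul]; rfl
  have h2 : (M.submatrix f id) * ((1 : Matrix (Fin m) (Fin m) ℝ).submatrix (Equiv.refl (Fin m)) g)
      = M.submatrix f g := by
    rw [mul_submatrix_one]; rfl
  rw [← h2]
  refine le_trans (rank_mul_le_left _ _) ?_
  rw [← h1]
  exact rank_mul_le_right _ _

lemma sign_flip {x y : ℝ} {k : ℕ} (h : x = (-1) ^ k * y) : y = (-1) ^ k * x := by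
  subst h
  have hek : ((-1 : ℝ)) ^ (k + k) = 1 := Even.neg_one_pow ⟨k, rfl⟩
  rw [← mul_assoc, ← pow_add, hek, one_mul]

/-- Let `M` be a real symmetric singular `(n+2)×(n+2)` matrix and `i ≠ j`.
Then `(det of M with row i and column j deleted)²` equals
`(det of M with row i and column i deleted) · (det of M with row j and column j deleted)`. -/
theorem stmt_17 (n : ℕ) (M : Matrix (Fin (n + 2)) (Fin (n + 2)) ℝ) (hM : M.IsSymm)
    (hdet : M.det = 0) (i j : Fin (n + 2)) (hij : i ≠ j) :
    Matrix.det (M.submatrix i.succAbove j.succAbove) ^ 2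
      = Matrix.det (M.submatrix i.succAbove i.succAbove)
        * Matrix.det (M.submatrix j.succAbove j.succAbove) := by
  set A := M.adjugate with hA
  have hadj : ∀ a b : Fin (n + 2), A b a
      = (-1) ^ ((a : ℕ) + (b : ℕ)) * Matrix.det (M.submatrix a.succAbove b.succAbove) :=
    fun a b => Matrix.adjugate_fin_succ_eq_det_submatrix M b a
  have hAsymm : ∀ a b, A a b = A b a := by
    have hT : A.IsSymm := by
      rw [Matrix.IsSymm, hA, Matrix.adjugate_transpose, hM]
    intro a b
    exact hT.apply b a
  have key : A j i * A i j = A i i * A j j := by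
    by_cases hA0 : A = 0
    · simp [hA0]
    · obtain ⟨p, q, hpq⟩ : ∃ p q, A p q ≠ 0 := by
        by_contra h
        push_neg at h
        exact hA0 (by ext a b; simpa using h a b)
      have hsub : IsUnit (M.submatrix q.succAbove p.succAbove).det := by
        have hq := hadj q p
        rw [hq] at hpq
        refine Ne.isUnit fun h0 => ?_
        rw [h0, mul_zero] at hpq; exact hpq rfl
      have hrank : n + 1 ≤ M.rank := by
        have h1 : (M.submatrix q.succAbove p.succAbove).rank = n + 1 := by
          simpa using
            Matrix.rank_of_isUnit _ ((Matrix.isUnit_iff_isUnit_det _).2 hsub)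
        exact h1 ▸ rank_submatrix_le_aux M _ _
      have hker : Module.finrank ℝ (LinearMap.ker M.mulVecLin) ≤ 1 := by
        have hrn := LinearMap.finrank_range_add_finrank_ker M.mulVecLin
        have hfr : Module.finrank ℝ (Fin (n + 2) → ℝ) = n + 2 := by
          simp [Module.finrank_pi]
        rw [hfr] at hrn
        have : n + 1 ≤ Module.finrank ℝ (LinearMap.range M.mulVecLin) := hrank
        omega
      have hcol : ∀ c : Fin (n + 2), (fun r => A r c) ∈ LinearMap.ker M.mulVecLin := by
        intro c
        have hMA : M * A = 0 := by rw [hA, Matrix.mul_adjugate, hdet, zero_smul]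
        rw [LinearMap.mem_ker]
        ext r
        have h0 : (M * A) r c = 0 := by rw [hMA]; rfl
        simpa [Matrix.mulVecLin_apply, Matrix.mulVec, Matrix.mul_apply,
          dotProduct] using h0
      set v : Fin (n + 2) → ℝ := fun r => A r q with hv
      have hvne : v ≠ 0 := fun h => hpq (by simpa [hv] using congrFun h p)
      have hspan : (ℝ ∙ v) = LinearMap.ker M.mulVecLin := by
        apply Submodule.eq_of_le_of_finrank_le
        · rw [Submodule.span_le, Set.singleton_subset_iff]; exact hcol q
        · rw [finrank_span_singleton hvne]; exact hker
      have hprop : ∀ c : Fin (n + 2), ∃ t : ℝ, ∀ r, A r c = t * v r := by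
        intro c
        have hmem : (fun r => A r c) ∈ (ℝ ∙ v) := hspan ▸ hcol c
        obtain ⟨t, ht⟩ := Submodule.mem_span_singleton.1 hmem
        exact ⟨t, fun r => by simpa using (congrFun ht r).symm⟩
      obtain ⟨ti, hti⟩ := hprop i
      obtain ⟨tj, htj⟩ := hprop j
      calc A j i * A i j = (ti * v j) * (tj * v i) := by rw [hti j, htj i]
        _ = (ti * v i) * (tj * v j) := by ring
        _ = A i i * A j j := by rw [hti i, htj j]
  have hei : ((-1 : ℝ)) ^ ((i : ℕ) + (i : ℕ)) = 1 := Even.neg_one_pow ⟨(i : ℕ), rfl⟩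
  have hej : ((-1 : ℝ)) ^ ((j : ℕ) + (j : ℕ)) = 1 := Even.neg_one_pow ⟨(j : ℕ), rfl⟩
  have hsq : (((-1 : ℝ)) ^ ((i : ℕ) + (j : ℕ))) ^ 2 = 1 := by
    rw [← pow_mul, mul_comm ((i : ℕ) + (j : ℕ)) 2, pow_mul, neg_one_sq, one_pow]
  rw [sign_flip (hadj i j), sign_flip (hadj i i), sign_flip (hadj j j),
    hei, hej, one_mul, one_mul, mul_pow, hsq, one_mul, sq, ← key, hAsymm i j]
end
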